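/- arXiv:0710.3147 — 2 statements merged into one kernel-verified Lean document; each statement's English description precedes it below -/
import Mathlib

section
/- Let X_• be a simplicial presheaf on a site C, let L_• → X_• and K_• → X_• be local acyclic fibrations, and let u_0, u_1 : L_• → K_• be two morphisms over X_•. Then there exist a simplicial presheaf M_•, a morphism v : M_• → L_• whose composite M_• → L_• → X_• is a local acyclic fibration, and a simplicial homotopy w : M_• × Δ^1 → K_• such that w ∘ e_0 = u_0 ∘ v and w ∘ e_1 = u_1 ∘ v, where e_0, e_1 : M_• → M_• × Δ^1 are the two standard inclusions. -/
universe u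

open CategoryTheory Simplicial Opposite Limits MonoidalCategory

/-- A simplicial presheaf on a (small) site `C`: a presheaf of simplicial sets. -/
abbrev SPsh (C : Type u) [SmallCategory C] := Cᵒᵖ ⥤ SSet.{u}

/-- `f : L ⟶ K` is a local acyclic fibration if every boundary-filling lifting problem
`∂Δ[k] → L(U)`, `Δ[k] → K(U)` admits, locally for a covering sieve of `U` in the
topology `J`, a diagonal lift `Δ[k] → L(V)`. -/
def IsLocalAcyclicFibration {C : Type u} [SmallCategory C] (J : GrothendieckTopology C)
    {L K : SPsh C} (f : L ⟶ K) : Prop :=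
  ∀ (U : C) (k : ℕ) (a : (∂Δ[k] : SSet.{u}) ⟶ L.obj (op U)) (b : Δ[k] ⟶ K.obj (op U)),
    a ≫ f.app (op U) = (∂Δ[k]).ι ≫ b →
    ∃ R ∈ J U, ∀ ⦃V : C⦄ (g : V ⟶ U), R g →
      ∃ ℓ : Δ[k] ⟶ L.obj (op V),
        (∂Δ[k]).ι ≫ ℓ = a ≫ L.map g.op ∧
        ℓ ≫ f.app (op V) = b ≫ K.map g.op

/-- The morphism from any simplicial set to `Δ[1]` that is constant at the vertex `i`. -/
def SSet.constVertexMap (X : SSet.{u}) (i : Fin 2) : X ⟶ Δ[1] where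
  app n := ↾fun _ ↦ SSet.stdSimplex.const 1 i n
  naturality n m α := by
    ext x
    rfl

variable {C : Type u} [SmallCategory C]

/-- The constant simplicial presheaf with value `Δ[1]`. -/
abbrev constDeltaOne (C : Type u) [SmallCategory C] : SPsh C :=
  (Functor.const Cᵒᵖ).obj Δ[1]

/-- The morphism of simplicial presheaves `M ⟶ Δ[1]` (constant simplicial presheaf)
which is levelwise constant at the vertex `i`. -/
def vertexNat (M : SPsh C) (i : Fin 2) : M ⟶ constDeltaOne C where
  app U := SSet.constVertexMap (M.obj U) i
  naturality U V g := by
    ext n x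
    rfl

/-- The inclusion `e_i : M ⟶ M × Δ[1]` at the vertex `i` (the objectwise product with
the constant simplicial presheaf on `Δ[1]`). -/
noncomputable def vertexInclusion (M : SPsh C) (i : Fin 2) : M ⟶ M ⊗ constDeltaOne C :=
  CartesianMonoidalCategory.lift (𝟙 M) (vertexNat M i)

namespace HEq1

lemma tfunext {X Y : Type u} {f g : X ⟶ Y} (h : ∀ x, f x = g x) : f = g :=
  ConcreteCategory.hom_ext _ _ h

/-- A subcomplex of a simplicial set, given by a family of subsets closed under the action. -/
structure Sub (D : SSet.{u}) where
  car : ∀ m : SimplexCategoryᵒᵖ, Set (D.obj m)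
  closed : ∀ {m m' : SimplexCategoryᵒᵖ} (φ : m ⟶ m') {d : D.obj m},
    d ∈ car m → D.map φ d ∈ car m'

/-- The simplicial set associated to a subcomplex. -/
def Sub.sset {D : SSet.{u}} (A : Sub D) : SSet.{u} where
  obj m := {d : D.obj m // d ∈ A.car m}
  map φ := ↾fun z => ⟨D.map φ z.1, A.closed φ z.2⟩
  map_id m := tfunext fun z => Subtype.ext (by simp)
  map_comp φ ψ := tfunext fun z => Subtype.ext (by simp)

lemma op_comp_eq {m m' : SimplexCategoryᵒᵖ} {n : SimplexCategory} (γ : m.unop ⟶ n)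
    (φ : m ⟶ m') : γ.op ≫ φ = (φ.unop ≫ γ).op := rfl

/-- Extension of a map along the addition of one (non-degenerate) simplex-closure. -/
lemma ext_lemma {D Y : SSet.{u}} (A A'' : Sub D) {n : ℕ} (τ : D.obj (op ⦋n⦌))
    (hmono : ∀ {m : SimplexCategoryᵒᵖ} (γ₁ γ₂ : m.unop ⟶ ⦋n⦌),
      D.map γ₁.op τ = D.map γ₂.op τ → γ₁ = γ₂)
    (hsub : ∀ {m : SimplexCategoryᵒᵖ} {d : D.obj m}, d ∈ A''.car m →
      d ∈ A.car m ∨ ∃ γ : m.unop ⟶ ⦋n⦌, d = D.map γ.op τ)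
    (H : A.sset ⟶ Y) (s : Y.obj (op ⦋n⦌))
    (hcomp : ∀ {m : SimplexCategoryᵒᵖ} (γ : m.unop ⟶ ⦋n⦌) (h : D.map γ.op τ ∈ A.car m),
      H.app m ⟨_, h⟩ = Y.map γ.op s) :
    ∃ H' : A''.sset ⟶ Y,
      (∀ (m : SimplexCategoryᵒᵖ) (d : D.obj m) (h : d ∈ A.car m) (h'' : d ∈ A''.car m),
        H'.app m ⟨d, h''⟩ = H.app m ⟨d, h⟩) ∧
      (∀ (m : SimplexCategoryᵒᵖ) (γ : m.unop ⟶ ⦋n⦌) (h'' : D.map γ.op τ ∈ A''.car m),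
        H'.app m ⟨_, h''⟩ = Y.map γ.op s) := by
  classical
  let f : ∀ m : SimplexCategoryᵒᵖ, A''.sset.obj m → Y.obj m := fun m z =>
    if h : z.1 ∈ A.car m then H.app m ⟨z.1, h⟩
    else Y.map ((hsub z.2).resolve_left h).choose.op s
  have hf1 : ∀ (m) (d : D.obj m) (h : d ∈ A.car m) (h'' : d ∈ A''.car m),
      f m ⟨d, h''⟩ = H.app m ⟨d, h⟩ := by
    intro m d h h''
    simp only [f, dif_pos h]
  have hf2 : ∀ (m : SimplexCategoryᵒᵖ) (γ : m.unop ⟶ ⦋n⦌) (h'' : D.map γ.op τ ∈ A''.car m),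
      f m ⟨_, h''⟩ = Y.map γ.op s := by
    intro m γ h''
    by_cases h : D.map γ.op τ ∈ A.car m
    · rw [hf1 _ _ h h'']
      exact hcomp γ h
    · simp only [f, dif_neg h]
      have hspec := ((hsub h'').resolve_left h).choose_spec
      rw [hmono _ _ hspec.symm]
  refine ⟨⟨fun m => ↾(f m), ?_⟩, hf1, hf2⟩
  intro m m' φ
  refine tfunext fun z => ?_
  obtain ⟨d, h''⟩ := z
  rcases hsub h'' with hA | ⟨γ, rfl⟩
  · show f m' ⟨D.map φ d, _⟩ = Y.map φ (f m ⟨d, h''⟩)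
    rw [hf1 _ _ hA h'', hf1 _ _ (A.closed φ hA) (A''.closed φ h'')]
    exact types_congr_hom (H.naturality φ) ⟨d, hA⟩
  · show f m' ⟨D.map φ (D.map γ.op τ), _⟩ = Y.map φ (f m ⟨D.map γ.op τ, h''⟩)
    have e1 : D.map φ (D.map γ.op τ) = D.map (φ.unop ≫ γ).op τ := by
      rw [← op_comp_eq, FunctorToTypes.map_comp_apply]
    have h''2 : D.map (φ.unop ≫ γ).op τ ∈ A''.car m' := e1 ▸ A''.closed φ h''
    have : f m' ⟨D.map φ (D.map γ.op τ), A''.closed φ h''⟩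
        = f m' ⟨D.map (φ.unop ≫ γ).op τ, h''2⟩ := by
      congr 1
      exact Subtype.ext e1
    rw [this, hf2 _ _ h''2, hf2 _ _ h'']
    rw [← op_comp_eq, FunctorToTypes.map_comp_apply]


/-- The boundary sphere of a simplex `τ`, as a map into a subcomplex containing it. -/
def bsub {D : SSet.{u}} (A : Sub D) {n : ℕ} (τ : D.obj (op ⦋n⦌))
    (hb : ∀ {m : SimplexCategoryᵒᵖ} (γ : m.unop ⟶ ⦋n⦌), ¬ Function.Surjective γ.toOrderHom →
      D.map γ.op τ ∈ A.car m) : (∂Δ[n] : SSet.{u}) ⟶ A.sset where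
  app m := ↾fun β => ⟨D.map (β.1.down).op τ, hb β.1.down β.2⟩
  naturality := by
    intro m m' φ
    refine tfunext fun β => ?_
    refine Subtype.ext ?_
    show D.map ((φ.unop ≫ β.1.down)).op τ = D.map φ (D.map (β.1.down).op τ)
    rw [← op_comp_eq, FunctorToTypes.map_comp_apply]

/-- Local-to-global composition of covering-sieve-indexed solutions. -/
lemma sieve_chain {C : Type u} [SmallCategory C] (J : GrothendieckTopology C)
    {V : C} {S : Sieve V} (hS : S ∈ J V) (P : ∀ ⦃W : C⦄, (W ⟶ V) → Prop)
    (hP : ∀ ⦃W W' : C⦄ (f : W ⟶ V) (f' : W' ⟶ W), P f → P (f' ≫ f))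
    (h : ∀ ⦃W : C⦄ (f : W ⟶ V), S f → ∃ T ∈ J W, ∀ ⦃W' : C⦄ (f' : W' ⟶ W), T f' → P (f' ≫ f)) :
    ∃ S' ∈ J V, ∀ ⦃W : C⦄ (f : W ⟶ V), S' f → P f := by
  refine ⟨⟨P, fun {W W'} {f} hf f' => hP f f' hf⟩, ?_, fun W f hf => hf⟩
  refine J.transitive hS _ ?_
  intro W f hf
  obtain ⟨T, hT, hT2⟩ := h f hf
  exact J.superset_covering (fun W' f' hf' => hT2 f' hf') hT


section Prism

variable (k : ℕ)

/-- The prism `Δ[k] × Δ[1]`. -/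
noncomputable abbrev Pr : SSet.{u} := Δ[k] ⊗ Δ[1]

/-- First coordinate of a prism simplex. -/
abbrev aco {m : SimplexCategoryᵒᵖ} (d : (Pr k).obj m) :
    Fin (m.unop.len + 1) →o Fin (k + 1) := d.1.down.toOrderHom

/-- Second coordinate of a prism simplex. -/
abbrev tco {m : SimplexCategoryᵒᵖ} (d : (Pr k).obj m) :
    Fin (m.unop.len + 1) →o Fin 2 := d.2.down.toOrderHom

lemma aco_map {m m' : SimplexCategoryᵒᵖ} (φ : m ⟶ m') (d : (Pr k).obj m) (j) :
    aco k ((Pr k).map φ d) j = aco k d (φ.unop.toOrderHom j) := rfl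

lemma tco_map {m m' : SimplexCategoryᵒᵖ} (φ : m ⟶ m') (d : (Pr k).obj m) (j) :
    tco k ((Pr k).map φ d) j = tco k d (φ.unop.toOrderHom j) := rfl


lemma homext {a b : SimplexCategory} {f g : a ⟶ b}
    (h : ∀ x, f.toOrderHom x = g.toOrderHom x) : f = g :=
  SimplexCategory.Hom.ext _ _ (OrderHom.ext _ _ (funext h))

lemma fin2_eq_one_of_ne_zero {x : Fin 2} (h : ¬ x = 0) : x = 1 := by omega

/-- the `t`-coordinate order hom of `σᵢ`. -/
def tOH (i : Fin (k+1)) : Fin (k+2) →o Fin 2 where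
  toFun j := if (j : ℕ) ≤ (i : ℕ) then 0 else 1
  monotone' := by
    intro a b hab
    have : (a : ℕ) ≤ (b : ℕ) := hab
    dsimp only
    split_ifs with h1 h2 h2
    · exact le_refl _
    · exact Fin.zero_le _
    · omega
    · exact le_refl _

/-- the base order hom of `σᵢ` (the `i`-th degeneracy). -/
def sOH (i : Fin (k+1)) : Fin (k+2) →o Fin (k+1) where
  toFun j := if h : (j : ℕ) ≤ (i : ℕ) then ⟨(j : ℕ), by have := i.isLt; omega⟩
    else ⟨(j : ℕ) - 1, by have := j.isLt; omega⟩
  monotone' := by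
    intro a b hab
    have : (a : ℕ) ≤ (b : ℕ) := hab
    dsimp only
    split_ifs with h1 h2 h2 <;> simp only [Fin.mk_le_mk] <;> omega

/-- the `t`-coordinate order hom of `τᵢ`. -/
def jOH (i : Fin (k+1)) : Fin (k+1) →o Fin 2 where
  toFun j := if (j : ℕ) < (i : ℕ) then 0 else 1
  monotone' := by
    intro a b hab
    have : (a : ℕ) ≤ (b : ℕ) := hab
    dsimp only
    split_ifs with h1 h2 h2
    · exact le_refl _
    · exact Fin.zero_le _
    · omega
    · exact le_refl _


variable {k}

lemma jOH_zero_iff {i : Fin (k+1)} {x : Fin (k+1)} : jOH k i x = 0 ↔ (x : ℕ) < (i : ℕ) := by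
  show (if (x : ℕ) < (i : ℕ) then (0 : Fin 2) else 1) = 0 ↔ _
  split_ifs with h
  · simpa using h
  · simpa using h

lemma jOH_one_iff {i : Fin (k+1)} {x : Fin (k+1)} : jOH k i x = 1 ↔ (i : ℕ) ≤ (x : ℕ) := by
  show (if (x : ℕ) < (i : ℕ) then (0 : Fin 2) else 1) = 1 ↔ _
  split_ifs with h
  · constructor
    · intro h'; exact absurd h' (by decide)
    · omega
  · simpa using h

lemma tOH_zero_iff {i : Fin (k+1)} {x : Fin (k+2)} : tOH k i x = 0 ↔ (x : ℕ) ≤ (i : ℕ) := by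
  show (if (x : ℕ) ≤ (i : ℕ) then (0 : Fin 2) else 1) = 0 ↔ _
  split_ifs with h
  · simpa using h
  · constructor
    · intro h'; exact absurd h' (by decide)
    · intro h'; exact absurd h' h

lemma tOH_one_iff {i : Fin (k+1)} {x : Fin (k+2)} : tOH k i x = 1 ↔ (i : ℕ) < (x : ℕ) := by
  show (if (x : ℕ) ≤ (i : ℕ) then (0 : Fin 2) else 1) = 1 ↔ _
  split_ifs with h
  · constructor
    · intro h'; exact absurd h' (by decide)
    · omega
  · constructor
    · intro _; omega
    · intro _; rfl

lemma sOH_val {i : Fin (k+1)} {x : Fin (k+2)} :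
    ((sOH k i x : Fin (k+1)) : ℕ) = if (x : ℕ) ≤ (i : ℕ) then (x : ℕ) else (x : ℕ) - 1 := by
  show ((if h : (x : ℕ) ≤ (i : ℕ) then (⟨(x : ℕ), by have := i.isLt; omega⟩ : Fin (k+1))
    else ⟨(x : ℕ) - 1, by have := x.isLt; omega⟩ : Fin (k+1)) : ℕ) = _
  split_ifs with h <;> rfl

variable (k)

/-- The degeneracy `⦋k+1⦌ ⟶ ⦋k⦌` underlying `σᵢ`. -/
def sigBase (i : Fin (k+1)) : (⦋k+1⦌ : SimplexCategory) ⟶ ⦋k⦌ := SimplexCategory.Hom.mk (sOH k i)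

/-- The `t`-component hom of `σᵢ`. -/
def sigT (i : Fin (k+1)) : (⦋k+1⦌ : SimplexCategory) ⟶ ⦋1⦌ := SimplexCategory.Hom.mk (tOH k i)

/-- The `t`-component hom of `τᵢ`. -/
def tauT (i : Fin (k+1)) : (⦋k⦌ : SimplexCategory) ⟶ ⦋1⦌ := SimplexCategory.Hom.mk (jOH k i)

/-- The top-dimensional simplex `σᵢ` of the prism. -/
noncomputable def sigEl (i : Fin (k+1)) : (Pr k).obj (op ⦋k+1⦌) :=
  (ULift.up (sigBase k i), ULift.up (sigT k i))

/-- The interior `k`-dimensional simplex `τᵢ` of the prism. -/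
noncomputable def tauEl (i : Fin (k+1)) : (Pr k).obj (op ⦋k⦌) :=
  (ULift.up (SimplexCategory.Hom.mk OrderHom.id), ULift.up (tauT k i))

/-- The subcomplexes of the prism: boundary ∪ endpoints ∪ (σⱼ for j ≥ i). -/
def PiP (i : ℕ) : Sub (Pr k) where
  car m d := (¬ Function.Surjective (aco k d)) ∨ (∀ j j', tco k d j = tco k d j')
    ∨ (∀ j, tco k d j = 1 → i ≤ (aco k d j : ℕ))
  closed := by
    intro m m' φ d hd
    rcases hd with h | h | h
    · refine Or.inl (fun hs => h ?_)
      intro y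
      obtain ⟨x, hx⟩ := hs y
      exact ⟨φ.unop.toOrderHom x, hx⟩
    · exact Or.inr (Or.inl (fun j j' => h _ _))
    · exact Or.inr (Or.inr (fun j hj => h _ hj))

/-- Adding the interior simplex `τᵢ` to `PiP (i+1)`. -/
def QiP (i : Fin (k+1)) : Sub (Pr k) where
  car m d := d ∈ (PiP k ((i : ℕ)+1)).car m ∨
    ∃ γ : m.unop ⟶ ⦋k⦌, d = (Pr k).map γ.op (tauEl k i)
  closed := by
    intro m m' φ d hd
    rcases hd with h | ⟨γ, rfl⟩
    · exact Or.inl ((PiP k _).closed φ h)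
    · refine Or.inr ⟨φ.unop ≫ γ, ?_⟩
      rw [← op_comp_eq, FunctorToTypes.map_comp_apply]

variable {k}

lemma fin2_cases (x : Fin 2) : x = 0 ∨ x = 1 := by revert x; decide

lemma PiP_anti {i i' : ℕ} (h : i ≤ i') {m : SimplexCategoryᵒᵖ} {d : (Pr k).obj m}
    (hd : d ∈ (PiP k i').car m) : d ∈ (PiP k i).car m := by
  rcases hd with h1 | h1 | h1
  · exact Or.inl h1
  · exact Or.inr (Or.inl h1)
  · exact Or.inr (Or.inr (fun j hj => le_trans h (h1 j hj)))

lemma PiP_zero {m : SimplexCategoryᵒᵖ} (d : (Pr k).obj m) : d ∈ (PiP k 0).car m :=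
  Or.inr (Or.inr (fun j _ => Nat.zero_le _))

lemma PiP_last {m : SimplexCategoryᵒᵖ} {d : (Pr k).obj m}
    (hd : d ∈ (PiP k (k+1)).car m) :
    (¬ Function.Surjective (aco k d)) ∨ (∀ j j', tco k d j = tco k d j') := by
  rcases hd with h | h | h
  · exact Or.inl h
  · exact Or.inr h
  · refine Or.inr (fun j j' => ?_)
    have hj : ∀ j'', tco k d j'' = 0 := by
      intro j''
      rcases fin2_cases (tco k d j'') with h0 | h1
      · exact h0
      · have := h j'' h1
        have := (aco k d j'').isLt
        omega
    rw [hj j, hj j']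

/-- boundary simplices of `τᵢ` lie in every `PiP`. -/
lemma tau_bdry (i : Fin (k+1)) (j : ℕ) {m : SimplexCategoryᵒᵖ} (γ : m.unop ⟶ ⦋k⦌)
    (hγ : ¬ Function.Surjective γ.toOrderHom) :
    (Pr k).map γ.op (tauEl k i) ∈ (PiP k j).car m := by
  refine Or.inl (fun hs => hγ ?_)
  intro y
  obtain ⟨x, hx⟩ := hs y
  exact ⟨x, hx⟩

lemma tau_fst (i : Fin (k+1)) {m : SimplexCategoryᵒᵖ} (γ : m.unop ⟶ ⦋k⦌) :
    ((Pr k).map γ.op (tauEl k i)).1 = ULift.up γ := by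
  show ULift.up (γ ≫ SimplexCategory.Hom.mk OrderHom.id) = ULift.up γ
  congr 1
  exact homext (fun x => rfl)

lemma tau_mono (i : Fin (k+1)) {m : SimplexCategoryᵒᵖ} (γ₁ γ₂ : m.unop ⟶ ⦋k⦌)
    (h : (Pr k).map γ₁.op (tauEl k i) = (Pr k).map γ₂.op (tauEl k i)) : γ₁ = γ₂ := by
  have h1 := congrArg Prod.fst h
  rw [tau_fst, tau_fst] at h1
  exact congrArg ULift.down h1

lemma tau_mem_imp_nonsurj (i : Fin (k+1)) (hi : 1 ≤ (i : ℕ)) {m : SimplexCategoryᵒᵖ}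
    (γ : m.unop ⟶ ⦋k⦌)
    (hmem : (Pr k).map γ.op (tauEl k i) ∈ (PiP k ((i : ℕ)+1)).car m) :
    ¬ Function.Surjective γ.toOrderHom := by
  intro hsurj
  have htco : ∀ j, tco k ((Pr k).map γ.op (tauEl k i)) j = jOH k i (γ.toOrderHom j) :=
    fun j => rfl
  rcases hmem with h | h | h
  · exact h (fun y => by obtain ⟨x, hx⟩ := hsurj y; exact ⟨x, hx⟩)
  · obtain ⟨j0, hj0⟩ := hsurj ⟨0, Nat.succ_pos _⟩
    obtain ⟨j1, hj1⟩ := hsurj ⟨k, Nat.lt_succ_of_le (Nat.le_of_eq rfl)⟩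
    have v0 : (γ.toOrderHom j0 : ℕ) = 0 := by rw [hj0]
    have v1 : (γ.toOrderHom j1 : ℕ) = k := by rw [hj1]
    have e0 : tco k ((Pr k).map γ.op (tauEl k i)) j0 = 0 := by
      rw [htco, jOH_zero_iff]; omega
    have e1 : tco k ((Pr k).map γ.op (tauEl k i)) j1 = 1 := by
      rw [htco, jOH_one_iff]; have := i.isLt; omega
    have := h j0 j1
    rw [e0, e1] at this
    exact absurd this (by decide)
  · obtain ⟨j, hj⟩ := hsurj ⟨(i : ℕ), i.isLt⟩
    have vj : (γ.toOrderHom j : ℕ) = (i : ℕ) := by rw [hj]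
    have e1 : tco k ((Pr k).map γ.op (tauEl k i)) j = 1 := by
      rw [htco, jOH_one_iff]; omega
    have h2 := h j e1
    have h3 : (aco k ((Pr k).map γ.op (tauEl k i)) j : ℕ) = (i : ℕ) := by
      show ((γ.toOrderHom j : Fin (k+1)) : ℕ) = (i : ℕ)
      omega
    omega

lemma tau_zero_mem {m : SimplexCategoryᵒᵖ} (γ : m.unop ⟶ ⦋k⦌) (j : ℕ) :
    (Pr k).map γ.op (tauEl k (0 : Fin (k+1))) ∈ (PiP k j).car m := by
  refine Or.inr (Or.inl ?_)
  intro a b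
  show jOH k 0 (γ.toOrderHom a) = jOH k 0 (γ.toOrderHom b)
  rw [jOH_one_iff.mpr (by simp), jOH_one_iff.mpr (by simp)]

lemma sig_aco (i : Fin (k+1)) {m : SimplexCategoryᵒᵖ} (γ' : m.unop ⟶ ⦋k+1⦌) (x) :
    aco k ((Pr k).map γ'.op (sigEl k i)) x = sOH k i (γ'.toOrderHom x) := rfl

lemma sig_tco (i : Fin (k+1)) {m : SimplexCategoryᵒᵖ} (γ' : m.unop ⟶ ⦋k+1⦌) (x) :
    tco k ((Pr k).map γ'.op (sigEl k i)) x = tOH k i (γ'.toOrderHom x) := rfl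

lemma tOH_jOH {i : Fin (k+1)} {y : Fin (k+2)} (hy : (y : ℕ) ≠ (i : ℕ)) :
    jOH k i (sOH k i y) = tOH k i y := by
  rcases fin2_cases (tOH k i y) with h | h
  · rw [h, jOH_zero_iff]
    rw [tOH_zero_iff] at h
    rw [sOH_val, if_pos h]
    omega
  · rw [h, jOH_one_iff]
    rw [tOH_one_iff] at h
    rw [sOH_val, if_neg (by omega)]
    omega

lemma val_ne_of_ne {n : ℕ} {x y : Fin n} (h : x ≠ y) : (x : ℕ) ≠ (y : ℕ) :=
  fun hv => h (Fin.ext hv)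

/-- boundary simplices of `σᵢ` lie in `QiP i`. -/
lemma sig_bdry (i : Fin (k+1)) {m : SimplexCategoryᵒᵖ} (γ' : m.unop ⟶ ⦋k+1⦌)
    (hγ : ¬ Function.Surjective γ'.toOrderHom) :
    (Pr k).map γ'.op (sigEl k i) ∈ (QiP k i).car m := by
  have hik := i.isLt
  rw [Function.Surjective] at hγ
  push_neg at hγ
  obtain ⟨v, hv⟩ := hγ
  have hvk : (v : ℕ) < k + 2 := v.isLt
  have vv : ∀ x, (γ'.toOrderHom x : ℕ) ≠ (v : ℕ) := fun x => val_ne_of_ne (hv x)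
  rcases Nat.lt_trichotomy (v : ℕ) (i : ℕ) with hvi | hvi | hvi
  · -- v < i : base coordinate misses v
    refine Or.inl (Or.inl ?_)
    intro hs
    obtain ⟨x, hx⟩ := hs ⟨(v : ℕ), by omega⟩
    have hxv : (sOH k i (γ'.toOrderHom x) : ℕ) = (v : ℕ) := congrArg Fin.val hx
    have := vv x
    rw [sOH_val] at hxv
    split_ifs at hxv <;> omega
  · -- v = i : the simplex is a multiple of τᵢ
    refine Or.inr ⟨γ' ≫ sigBase k i, ?_⟩
    refine Prod.ext ?_ ?_
    · show ULift.up (γ' ≫ sigBase k i)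
        = ULift.up ((γ' ≫ sigBase k i) ≫ SimplexCategory.Hom.mk OrderHom.id)
      exact congrArg ULift.up (homext (fun x => rfl)).symm
    · refine congrArg ULift.up (homext (fun x => ?_))
      show tOH k i (γ'.toOrderHom x) = jOH k i (sOH k i (γ'.toOrderHom x))
      exact (tOH_jOH (by rw [← hvi]; exact vv x)).symm
  · -- v > i
    by_cases hvi1 : (v : ℕ) = (i : ℕ) + 1
    · -- v = i+1 : all t=1 base values are ≥ i+1
      refine Or.inl (Or.inr (Or.inr ?_))
      intro x hx
      rw [sig_tco, tOH_one_iff] at hx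
      have := vv x
      rw [sig_aco, sOH_val, if_neg (by omega)]
      omega
    · -- v > i+1 : base coordinate misses v-1
      refine Or.inl (Or.inl ?_)
      intro hs
      obtain ⟨x, hx⟩ := hs ⟨(v : ℕ) - 1, by omega⟩
      have hxv : (sOH k i (γ'.toOrderHom x) : ℕ) = (v : ℕ) - 1 := congrArg Fin.val hx
      have := vv x
      rw [sOH_val] at hxv
      split_ifs at hxv <;> omega

lemma sig_mem_imp_nonsurj (i : Fin (k+1)) {m : SimplexCategoryᵒᵖ} (γ' : m.unop ⟶ ⦋k+1⦌)
    (hmem : (Pr k).map γ'.op (sigEl k i) ∈ (QiP k i).car m) :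
    ¬ Function.Surjective γ'.toOrderHom := by
  have hik := i.isLt
  intro hsurj
  rcases hmem with (h | h | h) | ⟨γ, hγ⟩
  · refine h ?_
    intro y
    by_cases hy : (y : ℕ) ≤ (i : ℕ)
    · obtain ⟨x, hx⟩ := hsurj ⟨(y : ℕ), by exact Nat.lt_succ_of_lt y.isLt⟩
      have hval : (γ'.toOrderHom x : ℕ) = (y : ℕ) := congrArg Fin.val hx
      refine ⟨x, Fin.ext ?_⟩
      show (sOH k i (γ'.toOrderHom x) : ℕ) = (y : ℕ)
      rw [sOH_val]
      split_ifs <;> omega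
    · obtain ⟨x, hx⟩ := hsurj ⟨(y : ℕ) + 1, by exact Nat.succ_lt_succ y.isLt⟩
      have hval : (γ'.toOrderHom x : ℕ) = (y : ℕ) + 1 := congrArg Fin.val hx
      refine ⟨x, Fin.ext ?_⟩
      show (sOH k i (γ'.toOrderHom x) : ℕ) = (y : ℕ)
      rw [sOH_val]
      split_ifs <;> omega
  · obtain ⟨x0, hx0⟩ := hsurj ⟨0, Nat.succ_pos _⟩
    obtain ⟨x1, hx1⟩ := hsurj ⟨k + 1, Nat.lt_succ_of_le (Nat.le_of_eq rfl)⟩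
    have v0 : (γ'.toOrderHom x0 : ℕ) = 0 := congrArg Fin.val hx0
    have v1 : (γ'.toOrderHom x1 : ℕ) = k + 1 := congrArg Fin.val hx1
    have hcc := h x0 x1
    rw [sig_tco, sig_tco] at hcc
    have e0 : tOH k i (γ'.toOrderHom x0) = 0 := tOH_zero_iff.mpr (by omega)
    have e1 : tOH k i (γ'.toOrderHom x1) = 1 := tOH_one_iff.mpr (by omega)
    exact absurd (e0.symm.trans (hcc.trans e1)) (by decide)
  · obtain ⟨x, hx⟩ := hsurj ⟨(i : ℕ) + 1, by exact Nat.succ_lt_succ i.isLt⟩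
    have hval : (γ'.toOrderHom x : ℕ) = (i : ℕ) + 1 := congrArg Fin.val hx
    have h2 := h x (by rw [sig_tco]; exact tOH_one_iff.mpr (by omega))
    rw [sig_aco, sOH_val,
      if_neg (show ¬ ((γ'.toOrderHom x : ℕ) ≤ (i : ℕ)) from by omega)] at h2
    omega
  · obtain ⟨x, hx⟩ := hsurj ⟨(i : ℕ), by exact Nat.lt_succ_of_lt i.isLt⟩
    have hval : (γ'.toOrderHom x : ℕ) = (i : ℕ) := congrArg Fin.val hx
    have h1 : (sOH k i (γ'.toOrderHom x) : ℕ) = (γ.toOrderHom x : ℕ) := by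
      have := congrArg (fun d => ((aco k d x : Fin (k+1)) : ℕ)) hγ
      exact this
    have h2 : tOH k i (γ'.toOrderHom x) = jOH k i (γ.toOrderHom x) := by
      have := congrArg (fun d => (tco k d x : Fin 2)) hγ
      exact this
    have e2 : tOH k i (γ'.toOrderHom x) = 0 := tOH_zero_iff.mpr (by omega)
    have e3 : jOH k i (γ.toOrderHom x) = 1 := by
      rw [jOH_one_iff]
      rw [sOH_val, if_pos (by omega)] at h1
      omega
    rw [e2, e3] at h2
    exact absurd h2 (by decide)

lemma sig_mono (i : Fin (k+1)) {m : SimplexCategoryᵒᵖ} (γ₁ γ₂ : m.unop ⟶ ⦋k+1⦌)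
    (h : (Pr k).map γ₁.op (sigEl k i) = (Pr k).map γ₂.op (sigEl k i)) : γ₁ = γ₂ := by
  refine homext (fun x => ?_)
  have h1 : (sOH k i (γ₁.toOrderHom x) : ℕ) = (sOH k i (γ₂.toOrderHom x) : ℕ) := by
    have := congrArg (fun d => ((aco k d x : Fin (k+1)) : ℕ)) h
    exact this
  have h2 : tOH k i (γ₁.toOrderHom x) = tOH k i (γ₂.toOrderHom x) := by
    have := congrArg (fun d => (tco k d x : Fin 2)) h
    exact this
  rw [sOH_val, sOH_val] at h1
  refine Fin.ext ?_
  rcases fin2_cases (tOH k i (γ₁.toOrderHom x)) with ht | ht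
  · have h2' := h2.symm.trans ht
    rw [tOH_zero_iff] at ht h2'
    rw [if_pos ht, if_pos h2'] at h1
    exact h1
  · have h2' := h2.symm.trans ht
    rw [tOH_one_iff] at ht h2'
    rw [if_neg (by omega), if_neg (by omega)] at h1
    have := (γ₁.toOrderHom x).isLt
    have := (γ₂.toOrderHom x).isLt
    omega

/-- The key splitting: `PiP i` is obtained from `PiP (i+1) ∪ τᵢ` by attaching `σᵢ`. -/
lemma PiP_succ_split (i : Fin (k+1)) {m : SimplexCategoryᵒᵖ} {d : (Pr k).obj m}
    (hd : d ∈ (PiP k (i : ℕ)).car m) :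
    d ∈ (PiP k ((i : ℕ)+1)).car m ∨ ∃ γ' : m.unop ⟶ ⦋k+1⦌, d = (Pr k).map γ'.op (sigEl k i) := by
  have hik := i.isLt
  rcases hd with h | h | h
  · exact Or.inl (Or.inl h)
  · exact Or.inl (Or.inr (Or.inl h))
  · by_cases h2 : ∀ j, tco k d j = 1 → (i : ℕ) + 1 ≤ (aco k d j : ℕ)
    · exact Or.inl (Or.inr (Or.inr h2))
    · push_neg at h2
      obtain ⟨j₀, ht₀, ha₀⟩ := h2
      have ha₀' : (aco k d j₀ : ℕ) = (i : ℕ) := le_antisymm (by omega) (h j₀ ht₀)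
      have key : ∀ x, tco k d x = 0 → (aco k d x : ℕ) ≤ (i : ℕ) := by
        intro x hx
        rcases le_or_gt x j₀ with hle | hlt
        · have := (aco k d).monotone hle
          have : (aco k d x : ℕ) ≤ (aco k d j₀ : ℕ) := this
          omega
        · have hmono := (tco k d).monotone (le_of_lt hlt)
          rw [ht₀, hx] at hmono
          exact absurd hmono (by decide)
      have key1 : ∀ x, tco k d x = 1 → (i : ℕ) ≤ (aco k d x : ℕ) := fun x hx => h x hx
      refine Or.inr ⟨(SimplexCategory.Hom.mk ⟨fun x =>
        if tco k d x = 0 then ⟨(aco k d x : ℕ), by exact Nat.lt_succ_of_lt (aco k d x).isLt⟩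
        else ⟨(aco k d x : ℕ) + 1, by exact Nat.succ_lt_succ (aco k d x).isLt⟩, ?_⟩
          : m.unop ⟶ ⦋k+1⦌), ?_⟩
      · -- monotonicity
        intro x y hxy
        have hamono : (aco k d x : ℕ) ≤ (aco k d y : ℕ) := (aco k d).monotone hxy
        have ht := (tco k d).monotone hxy
        dsimp only
        split_ifs with e1 e2 e2
        · simpa using hamono
        · simp only [Fin.mk_le_mk]; omega
        · rw [e2] at ht
          have h1 : tco k d x = 1 := fin2_eq_one_of_ne_zero e1
          rw [h1] at ht
          exact absurd ht (by decide)
        · simp only [Fin.mk_le_mk]; omega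
      · -- the equality d = σᵢ-multiple
        refine Prod.ext ?_ ?_
        · show d.1 = ULift.up (_ ≫ sigBase k i)
          have hd1 : d.1 = ULift.up d.1.down := rfl
          rw [hd1]
          refine congrArg ULift.up (homext (fun x => Fin.ext ?_))
          show (aco k d x : ℕ) = ((sOH k i) (if tco k d x = 0
            then ⟨(aco k d x : ℕ), Nat.lt_succ_of_lt (aco k d x).isLt⟩
            else ⟨(aco k d x : ℕ) + 1, Nat.succ_lt_succ (aco k d x).isLt⟩) : ℕ)
          by_cases e : tco k d x = 0
          · rw [if_pos e, sOH_val, if_pos (show _ ≤ (i : ℕ) from key x e)]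
          · have h1 : tco k d x = 1 := fin2_eq_one_of_ne_zero e
            have hk1 := key1 x h1
            rw [if_neg e, sOH_val,
              if_neg (show ¬ ((aco k d x : ℕ) + 1 ≤ (i : ℕ)) from by omega)]
            show (aco k d x : ℕ) = (aco k d x : ℕ) + 1 - 1
            omega
        · show d.2 = ULift.up (_ ≫ sigT k i)
          have hd2 : d.2 = ULift.up d.2.down := rfl
          rw [hd2]
          refine congrArg ULift.up (homext (fun x => ?_))
          show tco k d x = (tOH k i) (if tco k d x = 0
            then ⟨(aco k d x : ℕ), Nat.lt_succ_of_lt (aco k d x).isLt⟩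
            else ⟨(aco k d x : ℕ) + 1, Nat.succ_lt_succ (aco k d x).isLt⟩)
          by_cases e : tco k d x = 0
          · rw [if_pos e, e]
            exact (tOH_zero_iff.mpr (show _ ≤ (i : ℕ) from key x e)).symm
          · have h1 : tco k d x = 1 := fin2_eq_one_of_ne_zero e
            have hk1 := key1 x h1
            rw [if_neg e, h1]
            exact (tOH_one_iff.mpr (show (i : ℕ) < (aco k d x : ℕ) + 1 from by omega)).symm

end Prism

section PathObject

variable {C : Type u} [SmallCategory C] {X L K : SPsh C}

lemma sset_nat_app {A B : SSet.{u}} (f : A ⟶ B) {m m' : SimplexCategoryᵒᵖ} (φ : m ⟶ m')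
    (x : A.obj m) : f.app m' (A.map φ x) = B.map φ (f.app m x) :=
  NatTrans.naturality_apply f φ x

lemma psh_nat_app {A B : SPsh C} (f : A ⟶ B) {U U' : Cᵒᵖ} (g : U ⟶ U')
    {m : SimplexCategoryᵒᵖ} (x : (A.obj U).obj m) :
    (f.app U').app m (((A.map g)).app m x) = ((B.map g)).app m ((f.app U).app m x) := by
  have := congrArg (fun (t : A.obj U ⟶ B.obj U') => t.app m x) (f.naturality g)
  exact types_congr_hom (congrArg (fun (t : A.obj U ⟶ B.obj U') => t.app m) (f.naturality g)) x

variable (p : L ⟶ X) (q : K ⟶ X) (u₀ u₁ : L ⟶ K)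

/-- the two maps `u₀, u₁` bundled. -/
def ui : Fin 2 → (L ⟶ K) := ![u₀, u₁]

/-- The condition on a pair (simplex of `L`, prism homotopy into `K`) defining `M`. -/
def Cond (U : Cᵒᵖ) (m : SimplexCategoryᵒᵖ) (x : (L.obj U).obj m)
    (h : SSet.stdSimplex.obj m.unop ⊗ Δ[1] ⟶ K.obj U) : Prop :=
  (∀ (i : Fin 2) (m' : SimplexCategoryᵒᵖ) (γ : (SSet.stdSimplex.obj m.unop).obj m'),
      h.app m' (γ, SSet.stdSimplex.const 1 i m') =
        (K.obj U).map (γ.down).op (((ui u₀ u₁ i).app U).app m x)) ∧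
  (∀ (m' : SimplexCategoryᵒᵖ) (z : (SSet.stdSimplex.obj m.unop ⊗ Δ[1]).obj m'),
      (q.app U).app m' (h.app m' z) = (X.obj U).map (z.1.down).op ((p.app U).app m x))

lemma Cond.smap {U : Cᵒᵖ} {m m' : SimplexCategoryᵒᵖ} (φ : m ⟶ m')
    {x : (L.obj U).obj m} {h : SSet.stdSimplex.obj m.unop ⊗ Δ[1] ⟶ K.obj U}
    (hc : Cond p q u₀ u₁ U m x h) :
    Cond p q u₀ u₁ U m' ((L.obj U).map φ x)
      ((SSet.stdSimplex.map φ.unop ▷ Δ[1]) ≫ h) := by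
  constructor
  · intro i m'' γ
    show h.app m'' (ULift.up (γ.down ≫ φ.unop), SSet.stdSimplex.const 1 i m'') = _
    rw [hc.1 i m'' (ULift.up (γ.down ≫ φ.unop))]
    rw [sset_nat_app ((ui u₀ u₁ i).app U) φ x]
    exact FunctorToTypes.map_comp_apply (K.obj U) φ (γ.down).op _
  · intro m'' z
    show (q.app U).app m'' (h.app m'' (ULift.up (z.1.down ≫ φ.unop), z.2)) = _
    rw [hc.2 m'' (ULift.up (z.1.down ≫ φ.unop), z.2)]
    rw [sset_nat_app (p.app U) φ x]
    exact FunctorToTypes.map_comp_apply (X.obj U) φ (z.1.down).op _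

lemma Cond.pmap {U U' : Cᵒᵖ} (g : U ⟶ U') {m : SimplexCategoryᵒᵖ}
    {x : (L.obj U).obj m} {h : SSet.stdSimplex.obj m.unop ⊗ Δ[1] ⟶ K.obj U}
    (hc : Cond p q u₀ u₁ U m x h) :
    Cond p q u₀ u₁ U' m ((L.map g).app m x) (h ≫ K.map g) := by
  constructor
  · intro i m' γ
    show (K.map g).app m' (h.app m' (γ, SSet.stdSimplex.const 1 i m')) = _
    rw [hc.1 i m' γ, sset_nat_app (K.map g) (γ.down).op, psh_nat_app (ui u₀ u₁ i) g x]
  · intro m' z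
    show (q.app U').app m' ((K.map g).app m' (h.app m' z)) = _
    rw [psh_nat_app q g (h.app m' z), hc.2 m' z, psh_nat_app p g x]
    exact sset_nat_app (X.map g) (z.1.down).op _

variable (C) in
/-- The path-object-style simplicial presheaf `M`. -/
noncomputable def MM : SPsh C where
  obj U :=
    { obj := fun m => {z : (L.obj U).obj m ×
        ((SSet.stdSimplex.obj m.unop ⊗ Δ[1] : SSet.{u}) ⟶ K.obj U) //
        Cond p q u₀ u₁ U m z.1 z.2}
      map := fun φ => ↾fun z => ⟨((L.obj U).map φ z.1.1,
        (SSet.stdSimplex.map φ.unop ▷ Δ[1]) ≫ z.1.2), Cond.smap p q u₀ u₁ φ z.2⟩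
      map_id := by
        intro m
        refine tfunext fun z => ?_
        refine Subtype.ext (Prod.ext ?_ ?_)
        · exact FunctorToTypes.map_id_apply (L.obj U) z.1.1
        · show (SSet.stdSimplex.map (𝟙 m.unop) ▷ Δ[1]) ≫ z.1.2 = z.1.2
          erw [CategoryTheory.Functor.map_id]
          rw [MonoidalCategory.id_whiskerRight, Category.id_comp]
      map_comp := by
        intro m m' m'' φ ψ
        refine tfunext fun z => ?_
        refine Subtype.ext (Prod.ext ?_ ?_)
        · exact FunctorToTypes.map_comp_apply (L.obj U) φ ψ z.1.1
        · show (SSet.stdSimplex.map (ψ.unop ≫ φ.unop) ▷ Δ[1]) ≫ z.1.2 = _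
          erw [CategoryTheory.Functor.map_comp]
          rw [MonoidalCategory.comp_whiskerRight,
            Category.assoc]
          rfl }
  map g :=
    { app := fun m => ↾fun z => ⟨((L.map g).app m z.1.1, z.1.2 ≫ K.map g),
        Cond.pmap p q u₀ u₁ g z.2⟩
      naturality := by
        intro m m' φ
        refine tfunext fun z => ?_
        refine Subtype.ext (Prod.ext ?_ ?_)
        · exact sset_nat_app (L.map g) φ z.1.1
        · show ((SSet.stdSimplex.map φ.unop ▷ Δ[1]) ≫ z.1.2) ≫ K.map g
            = (SSet.stdSimplex.map φ.unop ▷ Δ[1]) ≫ (z.1.2 ≫ K.map g)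
          rw [Category.assoc] }
  map_id U := by
    apply NatTrans.ext
    funext m
    refine tfunext fun z => ?_
    refine Subtype.ext (Prod.ext ?_ ?_)
    · show (L.map (𝟙 U)).app m z.1.1 = z.1.1
      rw [CategoryTheory.Functor.map_id]
      rfl
    · show z.1.2 ≫ K.map (𝟙 U) = z.1.2
      rw [CategoryTheory.Functor.map_id, Category.comp_id]
  map_comp g g' := by
    apply NatTrans.ext
    funext m
    refine tfunext fun z => ?_
    refine Subtype.ext (Prod.ext ?_ ?_)
    · show (L.map (g ≫ g')).app m z.1.1 = (L.map g').app m ((L.map g).app m z.1.1)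
      rw [CategoryTheory.Functor.map_comp]
      rfl
    · show z.1.2 ≫ K.map (g ≫ g') = (z.1.2 ≫ K.map g) ≫ K.map g'
      rw [CategoryTheory.Functor.map_comp, Category.assoc]

/-- projection `M ⟶ L`. -/
noncomputable def vmap : MM C p q u₀ u₁ ⟶ L where
  app U := { app := fun m => ↾fun z => z.1.1
             naturality := by intro m m' φ; refine tfunext fun z => ?_; rfl }
  naturality := by
    intro U U' g
    apply NatTrans.ext
    funext m
    refine tfunext fun z => ?_
    rfl

/-- the homotopy `M ⊗ Δ[1] ⟶ K`. -/
noncomputable def wmap : (MM C p q u₀ u₁) ⊗ constDeltaOne C ⟶ K where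
  app U :=
    { app := fun m => ↾fun zt => zt.1.1.2.app m (ULift.up (𝟙 m.unop), zt.2)
      naturality := by
        intro m m' φ
        refine tfunext fun zt => ?_
        show zt.1.1.2.app m' (ULift.up ((𝟙 m'.unop) ≫ φ.unop), Δ[1].map φ zt.2)
          = (K.obj U).map φ (zt.1.1.2.app m (ULift.up (𝟙 m.unop), zt.2))
        rw [← sset_nat_app zt.1.1.2 φ (ULift.up (𝟙 m.unop), zt.2)]
        have e : (𝟙 m'.unop) ≫ φ.unop = φ.unop ≫ 𝟙 m.unop := by
          rw [Category.id_comp, Category.comp_id]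
        exact congrArg (fun t => zt.1.1.2.app m' (ULift.up t, Δ[1].map φ zt.2)) e }
  naturality := by
    intro U U' g
    apply NatTrans.ext
    funext m
    refine tfunext fun zt => ?_
    rfl

lemma vertexInclusion_app_apply (M : SPsh C) (i : Fin 2) (U : Cᵒᵖ)
    (m : SimplexCategoryᵒᵖ) (z : (M.obj U).obj m) :
    ((vertexInclusion M i).app U).app m z = (z, SSet.stdSimplex.const 1 i m) := rfl

lemma w_endpoints (i : Fin 2) :
    vertexInclusion (MM C p q u₀ u₁) i ≫ wmap p q u₀ u₁
      = vmap p q u₀ u₁ ≫ ui u₀ u₁ i := by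
  apply NatTrans.ext
  funext U
  apply NatTrans.ext
  funext m
  refine tfunext fun z => ?_
  show z.1.2.app m (ULift.up (𝟙 m.unop), SSet.stdSimplex.const 1 i m)
    = ((ui u₀ u₁ i).app U).app m z.1.1
  rw [z.2.1 i m (ULift.up (𝟙 m.unop))]
  show (K.obj U).map (𝟙 m) _ = _
  rw [FunctorToTypes.map_id_apply]

end PathObject

section BSection

variable {C : Type u} [SmallCategory C] {X L K : SPsh C}
variable (p : L ⟶ X) (q : K ⟶ X) (u₀ u₁ : L ⟶ K)

lemma nat_app_eq {A B : SSet.{u}} {f g : A ⟶ B} (h : f = g) (m : SimplexCategoryᵒᵖ)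
    (x : A.obj m) : f.app m x = g.app m x := by rw [h]

lemma simplex_app (Y : SSet.{u}) {n : ℕ} (ℓ : (Δ[n] : SSet.{u}) ⟶ Y) {m : SimplexCategoryᵒᵖ}
    (x : (Δ[n] : SSet.{u}).obj m) :
    ℓ.app m x = Y.map (x.down).op (ℓ.app (op (⦋n⦌ : SimplexCategory))
      (ULift.up (𝟙 (⦋n⦌ : SimplexCategory)))) := by
  have e : (Δ[n] : SSet.{u}).map (x.down).op (ULift.up (𝟙 (⦋n⦌ : SimplexCategory))) = x := by
    show ULift.up (x.down ≫ 𝟙 (⦋n⦌ : SimplexCategory)) = x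
    rw [Category.comp_id]
    rfl

  conv_lhs => rw [← e]
  exact sset_nat_app ℓ (x.down).op (ULift.up (𝟙 (⦋n⦌ : SimplexCategory)))

example : True := trivial

/-- boundary simplex constructor. -/
def bel {n : ℕ} {m : SimplexCategoryᵒᵖ} (γ : m.unop ⟶ ⦋n⦌)
    (h : ¬ Function.Surjective γ.toOrderHom) : (∂Δ[n] : SSet.{u}).obj m :=
  ⟨ULift.up γ, h⟩

lemma tcon_snd {k : ℕ} {m : SimplexCategoryᵒᵖ} {d : (Pr k).obj m}
    (h : ∀ j j', tco k d j = tco k d j') :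
    d.2 = SSet.stdSimplex.const.{u} 1 (tco k d 0) m := by
  have h2 : d.2.down = (SSet.stdSimplex.const.{u} 1 (tco k d 0) m).down :=
    homext (fun x => h x 0)
  exact congrArg ULift.up h2

variable {U V : C} (g : V ⟶ U) {k : ℕ}
  (a : (∂Δ[k] : SSet.{u}) ⟶ (MM C p q u₀ u₁).obj (op U))
  (b : (Δ[k] : SSet.{u}) ⟶ X.obj (op U))
  (ℓ : (Δ[k] : SSet.{u}) ⟶ L.obj (op V))

/-- The base map on the subcomplex `∂Δ[k] × Δ[1] ∪ Δ[k] × ∂Δ[1]` of the prism. -/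
noncomputable def Bmap
    (hℓ1 : (∂Δ[k]).ι ≫ ℓ = (a ≫ (vmap p q u₀ u₁).app (op U)) ≫ L.map g.op) :
    ((PiP k (k+1)).sset : SSet.{u}) ⟶ K.obj (op V) where
  app m := ↾fun z =>
    if hs : Function.Surjective (aco k z.1) then
      ((ui u₀ u₁ (tco k z.1 0)).app (op V)).app m (ℓ.app m z.1.1)
    else
      ((a.app m ⟨z.1.1, hs⟩).1.2 ≫ K.map g.op).app m (ULift.up (𝟙 m.unop), z.1.2)
  naturality := by
    intro m m' φ
    refine tfunext fun z => ?_
    obtain ⟨d, hd⟩ := z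
    show (if hs : Function.Surjective (aco k ((Pr k).map φ d)) then
        ((ui u₀ u₁ (tco k ((Pr k).map φ d) 0)).app (op V)).app m'
          (ℓ.app m' ((Pr k).map φ d).1)
      else ((a.app m' ⟨((Pr k).map φ d).1, hs⟩).1.2 ≫ K.map g.op).app m'
          (ULift.up (𝟙 m'.unop), ((Pr k).map φ d).2))
      = (K.obj (op V)).map φ (if hs : Function.Surjective (aco k d) then
        ((ui u₀ u₁ (tco k d 0)).app (op V)).app m (ℓ.app m d.1)
      else ((a.app m ⟨d.1, hs⟩).1.2 ≫ K.map g.op).app m (ULift.up (𝟙 m.unop), d.2))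
    by_cases hs : Function.Surjective (aco k d)
    · have hTC : ∀ j j', tco k d j = tco k d j' :=
        (PiP_last hd).resolve_left (not_not_intro hs)
      have hTC' : ∀ j j', tco k ((Pr k).map φ d) j = tco k ((Pr k).map φ d) j' :=
        fun j j' => hTC _ _
      have ht0 : tco k ((Pr k).map φ d) 0 = tco k d 0 := hTC _ _
      rw [dif_pos hs]
      by_cases hs' : Function.Surjective (aco k ((Pr k).map φ d))
      · rw [dif_pos hs', ht0]
        have e1 : ℓ.app m' ((Pr k).map φ d).1 = (L.obj (op V)).map φ (ℓ.app m d.1) :=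
          sset_nat_app ℓ φ d.1
        rw [e1]
        exact sset_nat_app ((ui u₀ u₁ (tco k d 0)).app (op V)) φ (ℓ.app m d.1)
      · rw [dif_neg hs']
        -- mixed case : use the endpoint condition of the boundary datum
        have hc := (a.app m' ⟨((Pr k).map φ d).1, hs'⟩).2
        have e2 : ((Pr k).map φ d).2
            = SSet.stdSimplex.const 1 (tco k ((Pr k).map φ d) 0) m' :=
          tcon_snd hTC'
        rw [ht0] at e2
        have e3 : ((a.app m' ⟨((Pr k).map φ d).1, hs'⟩).1.2).app m'
              (ULift.up (𝟙 m'.unop), ((Pr k).map φ d).2)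
            = (K.obj (op U)).map (𝟙 m')
              (((ui u₀ u₁ (tco k d 0)).app (op U)).app m'
                 (a.app m' ⟨((Pr k).map φ d).1, hs'⟩).1.1) := by
          rw [e2]
          exact hc.1 (tco k d 0) m' (ULift.up (𝟙 m'.unop))
        show (K.map g.op).app m' ((a.app m' ⟨((Pr k).map φ d).1, hs'⟩).1.2.app m'
            (ULift.up (𝟙 m'.unop), ((Pr k).map φ d).2)) = _
        rw [e3, FunctorToTypes.map_id_apply]
        rw [← psh_nat_app (ui u₀ u₁ (tco k d 0)) g.op
          (a.app m' ⟨((Pr k).map φ d).1, hs'⟩).1.1]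
        have hb' : (L.map g.op).app m' (a.app m' ⟨((Pr k).map φ d).1, hs'⟩).1.1
            = ℓ.app m' ((Pr k).map φ d).1 :=
          (nat_app_eq hℓ1 m' (bel (((Pr k).map φ d).1.down) hs')).symm
        rw [hb']
        have e1 : ℓ.app m' ((Pr k).map φ d).1 = (L.obj (op V)).map φ (ℓ.app m d.1) :=
          sset_nat_app ℓ φ d.1
        rw [e1]
        exact sset_nat_app ((ui u₀ u₁ (tco k d 0)).app (op V)) φ (ℓ.app m d.1)
    · have hs' : ¬ Function.Surjective (aco k ((Pr k).map φ d)) := by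
        intro hcomp
        exact hs (fun y => by obtain ⟨x, hx⟩ := hcomp y; exact ⟨φ.unop.toOrderHom x, hx⟩)
      rw [dif_neg hs, dif_neg hs']
      have ha : a.app m' ⟨((Pr k).map φ d).1, hs'⟩
          = ((MM C p q u₀ u₁).obj (op U)).map φ (a.app m ⟨d.1, hs⟩) :=
        sset_nat_app a φ ⟨d.1, hs⟩
      rw [ha]
      show ((a.app m ⟨d.1, hs⟩).1.2 ≫ K.map g.op).app m'
          (ULift.up ((𝟙 m'.unop) ≫ φ.unop), Δ[1].map φ d.2) = _
      have e4 : ((SSet.stdSimplex.obj m.unop ⊗ Δ[1] : SSet.{u}).map φ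
          (ULift.up (𝟙 m.unop), d.2))
          = (ULift.up ((𝟙 m'.unop) ≫ φ.unop), Δ[1].map φ d.2) := by
        refine Prod.ext ?_ ?_
        · show ULift.up (φ.unop ≫ 𝟙 m.unop) = ULift.up ((𝟙 m'.unop) ≫ φ.unop)
          rw [Category.comp_id, Category.id_comp]
        · rfl
      rw [← sset_nat_app ((a.app m ⟨d.1, hs⟩).1.2 ≫ K.map g.op) φ
        (ULift.up (𝟙 m.unop), d.2), e4]
      rfl

lemma Bmap_over (h₀ : u₀ ≫ q = p) (h₁ : u₁ ≫ q = p)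
    (hab : a ≫ ((vmap p q u₀ u₁ ≫ p)).app (op U) = (∂Δ[k]).ι ≫ b)
    (hℓ1 : (∂Δ[k]).ι ≫ ℓ = (a ≫ (vmap p q u₀ u₁).app (op U)) ≫ L.map g.op)
    (hℓ2 : ℓ ≫ p.app (op V) = b ≫ X.map g.op)
    (m : SimplexCategoryᵒᵖ) (z : ((PiP k (k+1)).sset : SSet.{u}).obj m) :
    (q.app (op V)).app m ((Bmap p q u₀ u₁ g a ℓ hℓ1).app m z)
      = (b ≫ X.map g.op).app m z.1.1 := by
  have hui : ∀ i : Fin 2, ui u₀ u₁ i ≫ q = p := by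
    intro i
    fin_cases i
    · exact h₀
    · exact h₁
  obtain ⟨d, hd⟩ := z
  show (q.app (op V)).app m (if hs : Function.Surjective (aco k d) then
      ((ui u₀ u₁ (tco k d 0)).app (op V)).app m (ℓ.app m d.1)
    else ((a.app m ⟨d.1, hs⟩).1.2 ≫ K.map g.op).app m (ULift.up (𝟙 m.unop), d.2))
    = (b ≫ X.map g.op).app m d.1
  by_cases hs : Function.Surjective (aco k d)
  · rw [dif_pos hs]
    have e1 : (q.app (op V)).app m
        (((ui u₀ u₁ (tco k d 0)).app (op V)).app m (ℓ.app m d.1))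
        = ((p.app (op V))).app m (ℓ.app m d.1) :=
      congrArg (fun (t : L ⟶ X) => ((t.app (op V)).app m (ℓ.app m d.1))) (hui (tco k d 0))
    rw [e1]
    exact nat_app_eq hℓ2 m d.1
  · rw [dif_neg hs]
    show (q.app (op V)).app m ((K.map g.op).app m
      ((a.app m ⟨d.1, hs⟩).1.2.app m (ULift.up (𝟙 m.unop), d.2))) = _
    rw [psh_nat_app q g.op]
    rw [(a.app m ⟨d.1, hs⟩).2.2 m (ULift.up (𝟙 m.unop), d.2)]
    have eid : ((ULift.up (𝟙 m.unop), d.2) :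
        (SSet.stdSimplex.obj m.unop ⊗ Δ[1] : SSet.{u}).obj m).1.down.op = 𝟙 m := rfl
    rw [eid, FunctorToTypes.map_id_apply]
    have e2 : (p.app (op U)).app m (a.app m ⟨d.1, hs⟩).1.1 = b.app m d.1 :=
      nat_app_eq hab m ⟨d.1, hs⟩
    rw [e2]
    rfl

end BSection

section SolSection

variable {C : Type u} [SmallCategory C] {X L K : SPsh C}
variable (p : L ⟶ X) (q : K ⟶ X) (u₀ u₁ : L ⟶ K)
variable {U V : C} (g : V ⟶ U) {k : ℕ}
  (a : (∂Δ[k] : SSet.{u}) ⟶ (MM C p q u₀ u₁).obj (op U))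
  (b : (Δ[k] : SSet.{u}) ⟶ X.obj (op U))
  (ℓ : (Δ[k] : SSet.{u}) ⟶ L.obj (op V))
  (hℓ1 : (∂Δ[k]).ι ≫ ℓ = (a ≫ (vmap p q u₀ u₁).app (op U)) ≫ L.map g.op)

/-- A partial solution at stage `i` over `W`. -/
def Sol (i : ℕ) {W : C} (f : W ⟶ V) : Prop :=
  ∃ H : ((PiP k i).sset : SSet.{u}) ⟶ K.obj (op W),
    (∀ (m : SimplexCategoryᵒᵖ) (d : (Pr k).obj m) (hd : d ∈ (PiP k (k+1)).car m)
        (hd' : d ∈ (PiP k i).car m),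
        H.app m ⟨d, hd'⟩
          = (K.map f.op).app m ((Bmap p q u₀ u₁ g a ℓ hℓ1).app m ⟨d, hd⟩)) ∧
    (∀ (m : SimplexCategoryᵒᵖ) (d : (Pr k).obj m) (hd' : d ∈ (PiP k i).car m),
        (q.app (op W)).app m (H.app m ⟨d, hd'⟩)
          = (b ≫ X.map g.op ≫ X.map f.op).app m d.1)

lemma Sol_restrict (i : ℕ) {W W' : C} (f : W ⟶ V) (f' : W' ⟶ W)
    (h : Sol p q u₀ u₁ g a b ℓ hℓ1 i f) : Sol p q u₀ u₁ g a b ℓ hℓ1 i (f' ≫ f) := by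
  obtain ⟨H, h1, h2⟩ := h
  refine ⟨H ≫ K.map f'.op, ?_, ?_⟩
  · intro m d hd hd'
    show (K.map f'.op).app m (H.app m ⟨d, hd'⟩) = _
    rw [h1 m d hd hd']
    rw [show ((f' ≫ f)).op = f.op ≫ f'.op from rfl, CategoryTheory.Functor.map_comp]
    rfl
  · intro m d hd'
    show (q.app (op W')).app m ((K.map f'.op).app m (H.app m ⟨d, hd'⟩)) = _
    rw [psh_nat_app q f'.op, h2 m d hd']
    rw [show ((f' ≫ f)).op = f.op ≫ f'.op from rfl, CategoryTheory.Functor.map_comp]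
    rfl

lemma Sol_base (h₀ : u₀ ≫ q = p) (h₁ : u₁ ≫ q = p)
    (hab : a ≫ ((vmap p q u₀ u₁ ≫ p)).app (op U) = (∂Δ[k]).ι ≫ b)
    (hℓ2 : ℓ ≫ p.app (op V) = b ≫ X.map g.op)
    {W : C} (f : W ⟶ V) : Sol p q u₀ u₁ g a b ℓ hℓ1 (k+1) f := by
  refine ⟨Bmap p q u₀ u₁ g a ℓ hℓ1 ≫ K.map f.op, ?_, ?_⟩
  · intro m d hd hd'
    rfl
  · intro m d hd'
    show (q.app (op W)).app m ((K.map f.op).app m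
      ((Bmap p q u₀ u₁ g a ℓ hℓ1).app m ⟨d, hd'⟩)) = _
    rw [psh_nat_app q f.op,
      Bmap_over p q u₀ u₁ g a b ℓ h₀ h₁ hab hℓ1 hℓ2 m ⟨d, hd'⟩]
    rfl

end SolSection

section StepSection

variable {C : Type u} [SmallCategory C] {X L K : SPsh C}
variable (p : L ⟶ X) (q : K ⟶ X) (u₀ u₁ : L ⟶ K)
variable (J : GrothendieckTopology C)
variable {U V : C} (g : V ⟶ U) {k : ℕ}
  (a : (∂Δ[k] : SSet.{u}) ⟶ (MM C p q u₀ u₁).obj (op U))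
  (b : (Δ[k] : SSet.{u}) ⟶ X.obj (op U))
  (ℓ : (Δ[k] : SSet.{u}) ⟶ L.obj (op V))
  (hℓ1 : (∂Δ[k]).ι ≫ ℓ = (a ≫ (vmap p q u₀ u₁).app (op U)) ≫ L.map g.op)

lemma step (hq : IsLocalAcyclicFibration J q) (i : Fin (k+1)) {W : C} (f : W ⟶ V)
    (hSol : Sol p q u₀ u₁ g a b ℓ hℓ1 ((i : ℕ)+1) f) :
    ∃ T ∈ J W, ∀ ⦃W' : C⦄ (f' : W' ⟶ W), T f' →
      Sol p q u₀ u₁ g a b ℓ hℓ1 (i : ℕ) (f' ≫ f) := by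
  obtain ⟨H, hHB, hHq⟩ := hSol
  -- Stage 1 : produce (locally) the filler of the interior face τᵢ
  have stage1 : ∃ T₁ ∈ J W, ∀ ⦃W₁ : C⦄ (f₁ : W₁ ⟶ W), T₁ f₁ →
      ∃ s : (K.obj (op W₁)).obj (op (⦋k⦌ : SimplexCategory)),
        (∀ (m : SimplexCategoryᵒᵖ) (γ : m.unop ⟶ ⦋k⦌)
            (hA : (Pr k).map γ.op (tauEl k i) ∈ (PiP k ((i:ℕ)+1)).car m),
            (K.map f₁.op).app m (H.app m ⟨_, hA⟩) = (K.obj (op W₁)).map γ.op s) ∧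
        ((q.app (op W₁)).app (op (⦋k⦌ : SimplexCategory)) s
          = (b ≫ X.map g.op ≫ X.map f.op ≫ X.map f₁.op).app (op (⦋k⦌ : SimplexCategory))
              (ULift.up (𝟙 (⦋k⦌ : SimplexCategory)))) := by
    by_cases hi0 : (i : ℕ) = 0
    · have hieq : i = ⟨0, Nat.succ_pos k⟩ := Fin.ext hi0
      subst hieq
      have hmemτ : tauEl.{u} k (⟨0, Nat.succ_pos k⟩ : Fin (k+1))
          ∈ (PiP.{u} k ((((⟨0, Nat.succ_pos k⟩ : Fin (k+1)) : ℕ))+1)).car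
            (op (⦋k⦌ : SimplexCategory)) := by
        have h0 := tau_zero_mem.{u} (k := k) (𝟙 (⦋k⦌ : SimplexCategory)) 1
        rw [show ((𝟙 (⦋k⦌ : SimplexCategory)).op) = 𝟙 (op (⦋k⦌ : SimplexCategory)) from rfl,
          FunctorToTypes.map_id_apply] at h0
        exact h0
      refine ⟨⊤, J.top_mem W, ?_⟩
      intro W₁ f₁ _
      refine ⟨(K.map f₁.op).app _ (H.app (op (⦋k⦌ : SimplexCategory))
        ⟨tauEl k ⟨0, Nat.succ_pos k⟩, hmemτ⟩), ?_, ?_⟩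
      · intro m γ hA
        have hnat : H.app m ⟨(Pr k).map γ.op (tauEl k ⟨0, Nat.succ_pos k⟩), hA⟩
            = (K.obj (op W)).map γ.op (H.app (op (⦋k⦌ : SimplexCategory))
                ⟨tauEl k ⟨0, Nat.succ_pos k⟩, hmemτ⟩) :=
          sset_nat_app H γ.op ⟨tauEl k ⟨0, Nat.succ_pos k⟩, hmemτ⟩
        rw [hnat]
        exact sset_nat_app (K.map f₁.op) γ.op _
      · rw [psh_nat_app q f₁.op, hHq _ (tauEl k ⟨0, Nat.succ_pos k⟩) hmemτ]
        rfl
    · have hi1 : 1 ≤ (i : ℕ) := Nat.one_le_iff_ne_zero.mpr hi0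
      set aτ : (∂Δ[k] : SSet.{u}) ⟶ K.obj (op W) :=
        bsub (PiP k ((i:ℕ)+1)) (tauEl k i) (fun γ hγ => tau_bdry i ((i:ℕ)+1) γ hγ) ≫ H
        with haτ
      set bτ : (Δ[k] : SSet.{u}) ⟶ X.obj (op W) := b ≫ X.map g.op ≫ X.map f.op with hbτ
      have hcompat : aτ ≫ q.app (op W) = (∂Δ[k]).ι ≫ bτ := by
        apply NatTrans.ext
        funext m
        refine tfunext fun β => ?_
        show (q.app (op W)).app m (H.app m ⟨(Pr k).map (β.1.down).op (tauEl k i), _⟩)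
          = bτ.app m β.1
        rw [hHq m ((Pr k).map (β.1.down).op (tauEl k i)) _]
        show bτ.app m (ULift.up (β.1.down ≫ SimplexCategory.Hom.mk OrderHom.id)) = _
        refine congrArg (bτ.app m) ?_
        show ULift.up (β.1.down ≫ 𝟙 (⦋k⦌ : SimplexCategory)) = β.1
        rw [Category.comp_id]
        rfl
      obtain ⟨T₁, hT₁, hlift₁⟩ := hq W k aτ bτ hcompat
      refine ⟨T₁, hT₁, ?_⟩
      intro W₁ f₁ hf₁
      obtain ⟨ℓF, e1, e2⟩ := hlift₁ f₁ hf₁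
      refine ⟨ℓF.app (op (⦋k⦌ : SimplexCategory)) (ULift.up (𝟙 (⦋k⦌ : SimplexCategory))),
        ?_, ?_⟩
      · intro m γ hA
        have hns := tau_mem_imp_nonsurj.{u} i hi1 γ hA
        have hb1 := nat_app_eq e1 m (bel γ hns)
        calc (K.map f₁.op).app m (H.app m ⟨(Pr k).map γ.op (tauEl k i), hA⟩)
            = ℓF.app m (ULift.up γ) := hb1.symm
          _ = _ := simplex_app _ ℓF (ULift.up γ)
      · have hb2 := nat_app_eq e2 (op (⦋k⦌ : SimplexCategory))
          (ULift.up (𝟙 (⦋k⦌ : SimplexCategory)))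
        exact hb2
  -- Stage 2 : extend over τᵢ then fill σᵢ, locally
  obtain ⟨T₁, hT₁, hst1⟩ := stage1
  refine sieve_chain J hT₁ (fun {W'} f' => Sol p q u₀ u₁ g a b ℓ hℓ1 (i : ℕ) (f' ≫ f)) ?_ ?_
  · intro W₁ W₂ f₁ f₂ hs
    have := Sol_restrict p q u₀ u₁ g a b ℓ hℓ1 (i : ℕ) (f₁ ≫ f) f₂ hs
    rw [← Category.assoc] at this
    exact this
  · intro W₁ f₁ hf₁
    obtain ⟨s, hcomp, hqs⟩ := hst1 f₁ hf₁
    obtain ⟨HQ, hQ1, hQ2⟩ := ext_lemma (PiP k ((i:ℕ)+1)) (QiP k i) (tauEl k i)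
      (tau_mono i) (fun {m} {d} hd => hd) (H ≫ K.map f₁.op) s
      (fun {m} γ h => hcomp m γ h)
    have hQover : ∀ (m : SimplexCategoryᵒᵖ) (d : (Pr k).obj m)
        (hd : d ∈ (QiP k i).car m),
        (q.app (op W₁)).app m (HQ.app m ⟨d, hd⟩)
          = (b ≫ X.map g.op ≫ X.map f.op ≫ X.map f₁.op).app m d.1 := by
      intro m d hd
      have hd2 := hd
      rcases hd2 with hA | ⟨γ, rfl⟩
      · rw [hQ1 m d hA hd]
        show (q.app (op W₁)).app m ((K.map f₁.op).app m (H.app m ⟨d, hA⟩)) = _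
        rw [psh_nat_app q f₁.op, hHq m d hA]
        rfl
      · rw [hQ2 m γ hd]
        rw [sset_nat_app (q.app (op W₁)) γ.op s, hqs]
        rw [← sset_nat_app (b ≫ X.map g.op ≫ X.map f.op ≫ X.map f₁.op) γ.op
          (ULift.up (𝟙 (⦋k⦌ : SimplexCategory)))]
        rfl
    set aσ : (∂Δ[k+1] : SSet.{u}) ⟶ K.obj (op W₁) :=
      bsub (QiP k i) (sigEl k i) (fun γ' hγ' => sig_bdry i γ' hγ') ≫ HQ with haσ
    set bσ : (Δ[k+1] : SSet.{u}) ⟶ X.obj (op W₁) :=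
      SSet.stdSimplex.map (sigBase k i) ≫ b ≫ X.map g.op ≫ X.map f.op ≫ X.map f₁.op
      with hbσ
    have hcompat2 : aσ ≫ q.app (op W₁) = (∂Δ[k+1]).ι ≫ bσ := by
      apply NatTrans.ext
      funext m
      refine tfunext fun β => ?_
      show (q.app (op W₁)).app m (HQ.app m ⟨(Pr k).map (β.1.down).op (sigEl k i), _⟩)
        = bσ.app m β.1
      rw [hQover m ((Pr k).map (β.1.down).op (sigEl k i)) _]
      rfl
    obtain ⟨T₂, hT₂, hlift₂⟩ := hq W₁ (k+1) aσ bσ hcompat2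
    refine ⟨T₂, hT₂, ?_⟩
    intro W₂ f₂ hf₂
    obtain ⟨ℓS, e1', e2'⟩ := hlift₂ f₂ hf₂
    have hcomp₂ : ∀ {m : SimplexCategoryᵒᵖ} (γ' : m.unop ⟶ ⦋k+1⦌)
        (h : (Pr k).map γ'.op (sigEl k i) ∈ (QiP k i).car m),
        (HQ ≫ K.map f₂.op).app m ⟨_, h⟩
          = (K.obj (op W₂)).map γ'.op (ℓS.app (op (⦋k+1⦌ : SimplexCategory))
              (ULift.up (𝟙 (⦋k+1⦌ : SimplexCategory)))) := by
      intro m γ' h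
      have hns := sig_mem_imp_nonsurj.{u} i γ' h
      have hb1 := nat_app_eq e1' m (bel γ' hns)
      calc (HQ ≫ K.map f₂.op).app m ⟨_, h⟩
          = ℓS.app m (ULift.up γ') := hb1.symm
        _ = _ := simplex_app _ ℓS (ULift.up γ')
    obtain ⟨H₂, h21, h22⟩ := ext_lemma (QiP k i) (PiP k (i : ℕ)) (sigEl k i) (sig_mono i)
      (fun {m} {d} hd => (PiP_succ_split i hd).imp_left Or.inl) (HQ ≫ K.map f₂.op)
      (ℓS.app (op (⦋k+1⦌ : SimplexCategory)) (ULift.up (𝟙 (⦋k+1⦌ : SimplexCategory))))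
      hcomp₂
    refine ⟨H₂, ?_, ?_⟩
    · intro m d hd hd'
      have hdi1 : d ∈ (PiP k ((i:ℕ)+1)).car m := PiP_anti (by omega) hd
      have hdQ : d ∈ (QiP k i).car m := Or.inl hdi1
      rw [h21 m d hdQ hd']
      show (K.map f₂.op).app m (HQ.app m ⟨d, hdQ⟩) = _
      rw [hQ1 m d hdi1 hdQ]
      show (K.map f₂.op).app m ((K.map f₁.op).app m (H.app m ⟨d, hdi1⟩)) = _
      rw [hHB m d hd hdi1]
      rw [show (((f₂ ≫ f₁) ≫ f)).op = f.op ≫ f₁.op ≫ f₂.op from rfl,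
        CategoryTheory.Functor.map_comp, CategoryTheory.Functor.map_comp]
      rfl
    · intro m d hd'
      rcases PiP_succ_split i hd' with hQ | ⟨γ', hγ'⟩
      · have hdQ : d ∈ (QiP k i).car m := Or.inl hQ
        rw [h21 m d hdQ hd']
        show (q.app (op W₂)).app m ((K.map f₂.op).app m (HQ.app m ⟨d, hdQ⟩)) = _
        rw [psh_nat_app q f₂.op, hQover m d hdQ]
        rw [show (((f₂ ≫ f₁) ≫ f)).op = f.op ≫ f₁.op ≫ f₂.op from rfl,
          CategoryTheory.Functor.map_comp, CategoryTheory.Functor.map_comp]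
        rfl
      · subst hγ'
        rw [h22 m γ' hd']
        rw [sset_nat_app (q.app (op W₂)) γ'.op]
        have hqs₂ : (q.app (op W₂)).app (op (⦋k+1⦌ : SimplexCategory))
            (ℓS.app (op (⦋k+1⦌ : SimplexCategory)) (ULift.up (𝟙 (⦋k+1⦌ : SimplexCategory))))
            = (bσ ≫ X.map f₂.op).app (op (⦋k+1⦌ : SimplexCategory))
              (ULift.up (𝟙 (⦋k+1⦌ : SimplexCategory))) :=
          nat_app_eq e2' (op (⦋k+1⦌ : SimplexCategory))
            (ULift.up (𝟙 (⦋k+1⦌ : SimplexCategory)))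
        rw [hqs₂]
        rw [← sset_nat_app (bσ ≫ X.map f₂.op) γ'.op
          (ULift.up (𝟙 (⦋k+1⦌ : SimplexCategory)))]
        show (b ≫ X.map g.op ≫ X.map f.op ≫ X.map f₁.op ≫ X.map f₂.op).app m
            (ULift.up ((γ' ≫ 𝟙 (⦋k+1⦌ : SimplexCategory)) ≫ sigBase k i)) = _
        rw [show (((f₂ ≫ f₁) ≫ f)).op = f.op ≫ f₁.op ≫ f₂.op from rfl,
          CategoryTheory.Functor.map_comp, CategoryTheory.Functor.map_comp]
        refine congrArg ((b ≫ X.map g.op ≫ X.map f.op ≫ X.map f₁.op ≫ X.map f₂.op).app m) ?_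
        show ULift.up ((γ' ≫ 𝟙 (⦋k+1⦌ : SimplexCategory)) ≫ sigBase k i)
          = ULift.up (γ' ≫ sigBase k i)
        rw [Category.comp_id]

end StepSection

section MainSection

variable {C : Type u} [SmallCategory C] {X L K : SPsh C}
variable (p : L ⟶ X) (q : K ⟶ X) (u₀ u₁ : L ⟶ K)
variable (J : GrothendieckTopology C)
variable {U V : C} (g : V ⟶ U) {k : ℕ}
  (a : (∂Δ[k] : SSet.{u}) ⟶ (MM C p q u₀ u₁).obj (op U))
  (b : (Δ[k] : SSet.{u}) ⟶ X.obj (op U))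
  (ℓ : (Δ[k] : SSet.{u}) ⟶ L.obj (op V))
  (hℓ1 : (∂Δ[k]).ι ≫ ℓ = (a ≫ (vmap p q u₀ u₁).app (op U)) ≫ L.map g.op)

lemma Sol_all (h₀ : u₀ ≫ q = p) (h₁ : u₁ ≫ q = p)
    (hab : a ≫ ((vmap p q u₀ u₁ ≫ p)).app (op U) = (∂Δ[k]).ι ≫ b)
    (hℓ2 : ℓ ≫ p.app (op V) = b ≫ X.map g.op)
    (hq : IsLocalAcyclicFibration J q) (n : ℕ) :
    ∃ S ∈ J V, ∀ ⦃W : C⦄ (f : W ⟶ V), S f →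
      Sol p q u₀ u₁ g a b ℓ hℓ1 (k+1-n) f := by
  induction n with
  | zero =>
    exact ⟨⊤, J.top_mem V, fun W f _ =>
      Sol_base p q u₀ u₁ g a b ℓ hℓ1 h₀ h₁ hab hℓ2 f⟩
  | succ n ih =>
    obtain ⟨S, hS, hSol⟩ := ih
    by_cases hn : k+1-n = 0
    · refine ⟨S, hS, ?_⟩
      intro W f hf
      have e : k+1-(n+1) = k+1-n := by omega
      rw [e]
      exact hSol f hf
    · have hn2 : k - n < k + 1 := by omega
      have e2 : k+1-(n+1) = ((⟨k-n, hn2⟩ : Fin (k+1)) : ℕ) := by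
        show k+1-(n+1) = k-n
        omega
      rw [e2]
      refine sieve_chain J hS
        (fun {W} f => Sol p q u₀ u₁ g a b ℓ hℓ1 ((⟨k-n, hn2⟩ : Fin (k+1)) : ℕ) f) ?_ ?_
      · intro W W' f f' hs
        exact Sol_restrict p q u₀ u₁ g a b ℓ hℓ1 _ f f' hs
      · intro W f hf
        have hs := hSol f hf
        have e1 : k+1-n = ((⟨k-n, hn2⟩ : Fin (k+1)) : ℕ) + 1 := by
          show k+1-n = k-n+1
          omega
        rw [e1] at hs
        exact step p q u₀ u₁ J g a b ℓ hℓ1 hq ⟨k-n, hn2⟩ f hs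

lemma Sol_zero_lift (h₀ : u₀ ≫ q = p) (h₁ : u₁ ≫ q = p)
    (hab : a ≫ ((vmap p q u₀ u₁ ≫ p)).app (op U) = (∂Δ[k]).ι ≫ b)
    (hℓ2 : ℓ ≫ p.app (op V) = b ≫ X.map g.op)
    {W : C} (f : W ⟶ V) (hs : Sol p q u₀ u₁ g a b ℓ hℓ1 0 f) :
    ∃ ℓM : (Δ[k] : SSet.{u}) ⟶ (MM C p q u₀ u₁).obj (op W),
      (∂Δ[k]).ι ≫ ℓM = a ≫ (MM C p q u₀ u₁).map (f ≫ g).op ∧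
      ℓM ≫ ((vmap p q u₀ u₁ ≫ p)).app (op W) = b ≫ X.map (f ≫ g).op := by
  obtain ⟨H, hHB, hHq⟩ := hs
  set ψ : (Pr k : SSet.{u}) ⟶ K.obj (op W) :=
    { app := fun m => ↾fun dd => H.app m ⟨dd, PiP_zero dd⟩
      naturality := by
        intro m m' φ
        refine tfunext fun dd => ?_
        exact sset_nat_app H φ ⟨dd, PiP_zero dd⟩ } with hψ
  set x2 : (L.obj (op W)).obj (op (⦋k⦌ : SimplexCategory)) :=
    (L.map f.op).app _ (ℓ.app (op (⦋k⦌ : SimplexCategory))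
      (ULift.up (𝟙 (⦋k⦌ : SimplexCategory)))) with hx2
  have e0 : (p.app (op V)).app (op (⦋k⦌ : SimplexCategory))
      (ℓ.app (op (⦋k⦌ : SimplexCategory)) (ULift.up (𝟙 (⦋k⦌ : SimplexCategory))))
      = (b ≫ X.map g.op).app (op (⦋k⦌ : SimplexCategory))
        (ULift.up (𝟙 (⦋k⦌ : SimplexCategory))) :=
    nat_app_eq hℓ2 (op (⦋k⦌ : SimplexCategory)) (ULift.up (𝟙 (⦋k⦌ : SimplexCategory)))
  have e1 : (p.app (op W)).app (op (⦋k⦌ : SimplexCategory)) x2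
      = (X.map f.op).app (op (⦋k⦌ : SimplexCategory))
        ((b ≫ X.map g.op).app (op (⦋k⦌ : SimplexCategory))
          (ULift.up (𝟙 (⦋k⦌ : SimplexCategory)))) := by
    rw [hx2, psh_nat_app p f.op, e0]
  have hcond : Cond p q u₀ u₁ (op W) (op (⦋k⦌ : SimplexCategory)) x2 ψ := by
    constructor
    · intro i m' γ
      have hdP : ((γ, SSet.stdSimplex.const 1 i m') : (Pr k).obj m')
          ∈ (PiP k (k+1)).car m' := Or.inr (Or.inl (fun j j' => rfl))
      show H.app m' ⟨(γ, SSet.stdSimplex.const 1 i m'), PiP_zero _⟩ = _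
      rw [hHB m' _ hdP (PiP_zero _)]
      show (K.map f.op).app m' (if hsγ : Function.Surjective
          (aco k ((γ, SSet.stdSimplex.const 1 i m') : (Pr k).obj m')) then
          ((ui u₀ u₁ (tco k ((γ, SSet.stdSimplex.const 1 i m') : (Pr k).obj m') 0)).app
            (op V)).app m' (ℓ.app m' γ)
        else ((a.app m' ⟨γ, hsγ⟩).1.2 ≫ K.map g.op).app m'
            (ULift.up (𝟙 m'.unop), SSet.stdSimplex.const 1 i m')) = _
      by_cases hsγ : Function.Surjective
          (aco k ((γ, SSet.stdSimplex.const 1 i m') : (Pr k).obj m'))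
      · rw [dif_pos hsγ]
        show (K.map f.op).app m' (((ui u₀ u₁ i).app (op V)).app m' (ℓ.app m' γ)) = _
        rw [simplex_app (L.obj (op V)) ℓ γ]
        rw [sset_nat_app ((ui u₀ u₁ i).app (op V)) (γ.down).op]
        rw [sset_nat_app (K.map f.op) (γ.down).op]
        rw [← psh_nat_app (ui u₀ u₁ i) f.op]
      · rw [dif_neg hsγ]
        show (K.map f.op).app m' ((K.map g.op).app m'
          ((a.app m' ⟨γ, hsγ⟩).1.2.app m'
            (ULift.up (𝟙 m'.unop), SSet.stdSimplex.const 1 i m'))) = _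
        rw [(a.app m' ⟨γ, hsγ⟩).2.1 i m' (ULift.up (𝟙 m'.unop))]
        rw [show ((ULift.up (𝟙 m'.unop) :
            (SSet.stdSimplex.{u}.obj m'.unop).obj m').down).op
          = 𝟙 m' from rfl, FunctorToTypes.map_id_apply]
        rw [← psh_nat_app (ui u₀ u₁ i) g.op, ← psh_nat_app (ui u₀ u₁ i) f.op]
        have e2 : (L.map g.op).app m' (a.app m' ⟨γ, hsγ⟩).1.1 = ℓ.app m' γ :=
          (nat_app_eq hℓ1 m' ⟨γ, hsγ⟩).symm
        rw [e2, simplex_app (L.obj (op V)) ℓ γ]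
        rw [sset_nat_app (L.map f.op) (γ.down).op]
        rw [sset_nat_app ((ui u₀ u₁ i).app (op W)) (γ.down).op]
    · intro m' z
      show (q.app (op W)).app m' (H.app m' ⟨z, PiP_zero z⟩) = _
      rw [hHq m' z (PiP_zero z)]
      rw [e1]
      rw [← sset_nat_app (X.map f.op) (z.1.down).op]
      erw [← sset_nat_app (b ≫ X.map g.op) (z.1.down).op]
      show (b ≫ X.map g.op ≫ X.map f.op).app m' z.1
        = (X.map f.op).app m' ((b ≫ X.map g.op).app m'
            (ULift.up (z.1.down ≫ 𝟙 (⦋k⦌ : SimplexCategory))))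
      rw [Category.comp_id]
      rfl
  set zM : ((MM C p q u₀ u₁).obj (op W)).obj (op (⦋k⦌ : SimplexCategory)) :=
    ⟨(x2, ψ), hcond⟩ with hzM
  refine ⟨{ app := fun m' => ↾fun γ => ((MM C p q u₀ u₁).obj (op W)).map (γ.down).op zM
            naturality := by
              intro m m' φ
              refine tfunext fun γ => ?_
              show ((MM C p q u₀ u₁).obj (op W)).map ((φ.unop ≫ γ.down)).op zM = _
              rw [← op_comp_eq, FunctorToTypes.map_comp_apply]
              rfl }, ?_, ?_⟩
  · apply NatTrans.ext
    funext m'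
    refine tfunext fun β => ?_
    refine Subtype.ext (Prod.ext ?_ ?_)
    · show (L.obj (op W)).map (β.1.down).op x2
        = (L.map (f ≫ g).op).app m' (a.app m' β).1.1
      rw [hx2, ← sset_nat_app (L.map f.op) (β.1.down).op]
      rw [← simplex_app (L.obj (op V)) ℓ β.1]
      have e2 : ℓ.app m' β.1 = (L.map g.op).app m' (a.app m' β).1.1 := by
        have e3 := nat_app_eq hℓ1 m' β
        exact e3
      rw [e2]
      rw [show ((f ≫ g)).op = g.op ≫ f.op from rfl, CategoryTheory.Functor.map_comp]
      rfl
    · show (SSet.stdSimplex.map (β.1.down) ▷ Δ[1]) ≫ ψ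
        = (a.app m' β).1.2 ≫ K.map (f ≫ g).op
      apply NatTrans.ext
      funext m''
      refine tfunext fun zz => ?_
      have hns2 : ¬ Function.Surjective ((zz.1.down ≫ β.1.down).toOrderHom) := by
        intro hsc
        refine β.2 ?_
        intro y
        obtain ⟨x, hx⟩ := hsc y
        exact ⟨zz.1.down.toOrderHom x, hx⟩
      have hdP2 : ((ULift.up (zz.1.down ≫ β.1.down), zz.2) : (Pr k).obj m'')
          ∈ (PiP k (k+1)).car m'' := Or.inl hns2
      show H.app m'' ⟨(ULift.up (zz.1.down ≫ β.1.down), zz.2), PiP_zero _⟩ = _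
      rw [hHB m'' _ hdP2 (PiP_zero _)]
      show (K.map f.op).app m'' (if hsγ : Function.Surjective
          (aco k ((ULift.up (zz.1.down ≫ β.1.down), zz.2) : (Pr k).obj m'')) then
          ((ui u₀ u₁ (tco k ((ULift.up (zz.1.down ≫ β.1.down), zz.2) : (Pr k).obj m'') 0)).app
            (op V)).app m'' (ℓ.app m'' (ULift.up (zz.1.down ≫ β.1.down)))
        else ((a.app m'' ⟨ULift.up (zz.1.down ≫ β.1.down), hsγ⟩).1.2 ≫ K.map g.op).app m''
            (ULift.up (𝟙 m''.unop), zz.2)) = _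
      rw [dif_neg (show ¬ Function.Surjective
        (aco k ((ULift.up (zz.1.down ≫ β.1.down), zz.2) : (Pr k).obj m'')) from hns2)]
      have ha2 : a.app m'' ⟨ULift.up (zz.1.down ≫ β.1.down), hns2⟩
          = ((MM C p q u₀ u₁).obj (op U)).map ((zz.1.down)).op (a.app m' β) :=
        sset_nat_app a ((zz.1.down)).op β
      rw [ha2]
      show (K.map f.op).app m'' ((K.map g.op).app m''
        ((a.app m' β).1.2.app m'' (ULift.up ((𝟙 m''.unop) ≫ zz.1.down), zz.2))) = _
      have e5 : (ULift.up ((𝟙 m''.unop) ≫ zz.1.down) : (SSet.stdSimplex.obj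
          m'.unop).obj m'') = zz.1 := by
        rw [Category.id_comp]
        rfl
      rw [e5]
      rw [show ((f ≫ g)).op = g.op ≫ f.op from rfl, CategoryTheory.Functor.map_comp]
      rfl
  · apply NatTrans.ext
    funext m'
    refine tfunext fun γ => ?_
    show (p.app (op W)).app m' ((L.obj (op W)).map (γ.down).op x2) = _
    rw [sset_nat_app (p.app (op W)) (γ.down).op x2, e1]
    rw [← sset_nat_app (X.map f.op) (γ.down).op]
    erw [← sset_nat_app (b ≫ X.map g.op) (γ.down).op]
    show (X.map f.op).app m' ((b ≫ X.map g.op).app m'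
        (ULift.up (γ.down ≫ 𝟙 (⦋k⦌ : SimplexCategory))))
      = (b ≫ X.map (f ≫ g).op).app m' γ
    rw [Category.comp_id]
    rw [show ((f ≫ g)).op = g.op ≫ f.op from rfl, CategoryTheory.Functor.map_comp]
    rfl

lemma MM_fib (h₀ : u₀ ≫ q = p) (h₁ : u₁ ≫ q = p)
    (hp : IsLocalAcyclicFibration J p) (hq : IsLocalAcyclicFibration J q) :
    IsLocalAcyclicFibration J (vmap p q u₀ u₁ ≫ p) := by
  intro U k a b hab
  obtain ⟨R₁, hR₁, hlift₁⟩ := hp U k (a ≫ (vmap p q u₀ u₁).app (op U)) b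
    (by rw [Category.assoc]; exact hab)
  refine sieve_chain J hR₁ (fun {V} g =>
    ∃ ℓM : (Δ[k] : SSet.{u}) ⟶ (MM C p q u₀ u₁).obj (op V),
      (∂Δ[k]).ι ≫ ℓM = a ≫ (MM C p q u₀ u₁).map g.op ∧
      ℓM ≫ ((vmap p q u₀ u₁ ≫ p)).app (op V) = b ≫ X.map g.op) ?_ ?_
  · intro V W g f' h
    obtain ⟨ℓM, h1, h2⟩ := h
    refine ⟨ℓM ≫ (MM C p q u₀ u₁).map f'.op, ?_, ?_⟩
    · rw [← Category.assoc, h1, Category.assoc,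
        show ((f' ≫ g)).op = g.op ≫ f'.op from rfl, CategoryTheory.Functor.map_comp]
    · rw [Category.assoc, NatTrans.naturality, ← Category.assoc, h2, Category.assoc,
        show ((f' ≫ g)).op = g.op ≫ f'.op from rfl, CategoryTheory.Functor.map_comp]
  · intro V g hg
    obtain ⟨ℓ, hℓ1', hℓ2⟩ := hlift₁ g hg
    have hℓ1 : (∂Δ[k]).ι ≫ ℓ
        = (a ≫ (vmap p q u₀ u₁).app (op U)) ≫ L.map g.op := hℓ1'
    obtain ⟨S, hS, hSol⟩ := Sol_all p q u₀ u₁ J g a b ℓ hℓ1 h₀ h₁ hab hℓ2 hq (k+1)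
    refine ⟨S, hS, ?_⟩
    intro W f hf
    have hs0 := hSol f hf
    rw [Nat.sub_self] at hs0
    exact Sol_zero_lift p q u₀ u₁ g a b ℓ hℓ1 h₀ h₁ hab hℓ2 f hs0

end MainSection

end HEq1

/-- Two morphisms `u₀ u₁ : L ⟶ K` between local acyclic fibrations over `X` can be
equalized up to simplicial homotopy after refining `L` by a local acyclic fibration:
there are `M`, `v : M ⟶ L` with `v ≫ p` a local acyclic fibration, and a homotopy
`w : M × Δ[1] ⟶ K` with `w ∘ e₀ = u₀ ∘ v` and `w ∘ e₁ = u₁ ∘ v`. -/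
theorem exists_homotopy_equalization
    (J : GrothendieckTopology C) {X L K : SPsh C}
    (p : L ⟶ X) (q : K ⟶ X) (hp : IsLocalAcyclicFibration J p)
    (hq : IsLocalAcyclicFibration J q)
    (u₀ u₁ : L ⟶ K) (h₀ : u₀ ≫ q = p) (h₁ : u₁ ≫ q = p) :
    ∃ (M : SPsh C) (v : M ⟶ L) (w : M ⊗ constDeltaOne C ⟶ K),
      IsLocalAcyclicFibration J (v ≫ p) ∧
      vertexInclusion M 0 ≫ w = v ≫ u₀ ∧
      vertexInclusion M 1 ≫ w = v ≫ u₁ := by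
  refine ⟨HEq1.MM C p q u₀ u₁, HEq1.vmap p q u₀ u₁, HEq1.wmap p q u₀ u₁, ?_, ?_, ?_⟩
  · exact HEq1.MM_fib p q u₀ u₁ J h₀ h₁ hp hq
  · have h := HEq1.w_endpoints p q u₀ u₁ 0
    rw [show HEq1.ui u₀ u₁ 0 = u₀ from rfl] at h
    exact h
  · have h := HEq1.w_endpoints p q u₀ u₁ 1
    rw [show HEq1.ui u₀ u₁ 1 = u₁ from rfl] at h
    exact h
end

section
/- Let C be a site, n ≥ 0, and let j_n^* denote the functor from simplicial presheaves on C to presheaves on C taking the degree-n component, with right adjoint j_{n*}. If u : A → B is a covering morphism of presheaves on C, then j_{n*}(u) : j_{n*}A → j_{n*}B is a local acyclic fibration of simplicial presheaves. -/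
universe u

open CategoryTheory Simplicial Opposite

/-- A morphism of presheaves of sets is a covering morphism if the induced morphism of
associated sheaves is an epimorphism. -/
def IsCoveringMorphism {C : Type u} [SmallCategory C] (J : GrothendieckTopology C)
    {A B : Cᵒᵖ ⥤ Type u} (u : A ⟶ B) : Prop :=
  Epi ((presheafToSheaf J (Type u)).map u)

/-- The functor taking a simplicial presheaf to its presheaf of `n`-simplices. -/
def evalDegree (C : Type u) [SmallCategory C] (n : ℕ) : SPsh C ⥤ (Cᵒᵖ ⥤ Type u) :=
  (Functor.whiskeringRight Cᵒᵖ SSet.{u} (Type u)).obj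
    ((evaluation SimplexCategoryᵒᵖ (Type u)).obj (op (SimplexCategory.mk n)))

/-! ### Auxiliary: an explicit right adjoint to evaluation on simplicial sets -/

/-- The value of the explicit right adjoint to evaluation at `[n]` on simplicial sets. -/
@[simps]
def coskObj (n : ℕ) (X : Type u) : SSet.{u} where
  obj m := (SimplexCategory.mk n ⟶ m.unop) → X
  map φ := TypeCat.ofHom fun f h => f (h ≫ φ.unop)
  map_id m := by ext f h; simp
  map_comp φ ψ := by ext f h; simp

/-- The explicit right adjoint to evaluation at `[n]` on simplicial sets. -/
@[simps]
def coskFun (n : ℕ) : Type u ⥤ SSet.{u} where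
  obj X := coskObj n X
  map f := { app := fun m => TypeCat.ofHom fun g h => f (g h) }

/-- The adjunction between evaluation at `[n]` and `coskFun n`. -/
def coskAdj (n : ℕ) :
    (evaluation SimplexCategoryᵒᵖ (Type u)).obj (op (SimplexCategory.mk n)) ⊣ coskFun n :=
  Adjunction.mkOfHomEquiv
    { homEquiv := fun S X =>
        { toFun := fun f =>
            { app := fun m => TypeCat.ofHom fun s h => f (S.map h.op s)
              naturality := by
                intro m m' φ
                ext s
                funext h
                show f (S.map h.op (S.map φ s)) = f (S.map (h ≫ φ.unop).op s)
                simp }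
          invFun := fun η => TypeCat.ofHom fun s => η.app (op (SimplexCategory.mk n)) s (𝟙 _)
          left_inv := fun f => by
            ext s
            dsimp
            show f (S.map (𝟙 (SimplexCategory.mk n)).op s) = f s
            simp
          right_inv := fun η => by
            ext m s
            funext h
            have := types_congr_hom (η.naturality h.op) s
            dsimp at this ⊢
            show η.app (op (SimplexCategory.mk n)) (S.map h.op s) (𝟙 _) = η.app m s h
            rw [this]
            show η.app m s (𝟙 _ ≫ h) = η.app m s h
            simp }
      homEquiv_naturality_left_symm := by intros; rfl
      homEquiv_naturality_right := by intros; rfl }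

/-! ### Covering morphisms are locally surjective -/

lemma isLocallySurjective_of_isCoveringMorphism
    {C : Type u} [SmallCategory C] (J : GrothendieckTopology C)
    {A B : Cᵒᵖ ⥤ Type u} (u : A ⟶ B)
    (hu : Epi ((presheafToSheaf J (Type u)).map u)) :
    Presheaf.IsLocallySurjective J u := by
  have h1 : Sheaf.IsLocallySurjective ((presheafToSheaf J (Type u)).map u) :=
    (Sheaf.isLocallySurjective_iff_epi _).2 hu
  have h2 : Presheaf.IsLocallySurjective J
      (toSheafify J A ≫ ((presheafToSheaf J (Type u)).map u).hom) :=
    Presheaf.isLocallySurjective_comp J _ _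
  have h3 : u ≫ toSheafify J B = toSheafify J A ≫ ((presheafToSheaf J (Type u)).map u).hom :=
    toSheafify_naturality J u
  rw [← h3] at h2
  exact (Presheaf.isLocallySurjective_comp_iff J u (toSheafify J B)).1 h2

/-! ### Finite intersections of covering sieves -/

lemma finsetInf_mem_grothendieck
    {C : Type u} [SmallCategory C] (J : GrothendieckTopology C) {U : C}
    {ι : Type*} [DecidableEq ι] (s : Finset ι) (S : ι → Sieve U)
    (h : ∀ i, S i ∈ J U) : s.inf S ∈ J U := by
  induction s using Finset.induction_on with
  | empty => simp only [Finset.inf_empty]; exact J.top_mem U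
  | insert _ _ _ ih =>
      rw [Finset.inf_insert]
      exact J.intersection_covering (h _) ih

noncomputable instance (n k : ℕ) :
    Fintype (SimplexCategory.mk n ⟶ SimplexCategory.mk k) :=
  Fintype.ofInjective (fun f => (f.toOrderHom : Fin (n + 1) → Fin (k + 1)))
    (fun _ _ hfg => SimplexCategory.Hom.ext _ _ (OrderHom.ext _ _ hfg))

noncomputable instance (n k : ℕ) :
    Fintype ((Δ[k] : SSet.{u}).obj (op (SimplexCategory.mk n))) := by
  exact Fintype.ofEquiv _ SSet.stdSimplex.objEquiv.symm

/-! ### The main lemma for the explicit right adjoint -/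

lemma isLocalAcyclicFibration_coskFun
    {C : Type u} [SmallCategory C] (J : GrothendieckTopology C) (n : ℕ)
    {A B : Cᵒᵖ ⥤ Type u} (u : A ⟶ B) (hu : Presheaf.IsLocallySurjective J u) :
    IsLocalAcyclicFibration J
      (((Functor.whiskeringRight Cᵒᵖ (Type u) SSet.{u}).obj (coskFun n)).map u) := by
  classical
  intro U k a b hab
  set nn := SimplexCategory.mk n with hnn
  let b' : Δ[k].obj (op nn) → B.obj (op U) := fun y => b.app (op nn) y (𝟙 nn)
  let a' : (∂Δ[k] : SSet.{u}).obj (op nn) → A.obj (op U) := fun y => a.app (op nn) y (𝟙 nn)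
  refine ⟨Finset.univ.inf (fun y : Δ[k].obj (op nn) => Presheaf.imageSieve u (b' y)),
    finsetInf_mem_grothendieck J _ _ (fun y => hu.imageSieve_mem (b' y)), ?_⟩
  intro V g hg
  have hgy : ∀ y : Δ[k].obj (op nn), Presheaf.imageSieve u (b' y) g := fun y =>
    (Finset.inf_le (Finset.mem_univ y) :
      Finset.univ.inf (fun y : Δ[k].obj (op nn) => Presheaf.imageSieve u (b' y)) ≤ _) g hg
  -- the local lift at the level of `n`-simplices
  let ℓ' : Δ[k].obj (op nn) → A.obj (op V) := fun y =>
    if hy : Function.Surjective (SSet.stdSimplex.asOrderHom y)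
    then Presheaf.localPreimage u (b' y) g (hgy y)
    else A.map g.op (a' ⟨y, hy⟩)
  -- basic compatibilities
  have hb' : ∀ (m : SimplexCategoryᵒᵖ) (x : Δ[k].obj m) (h : nn ⟶ m.unop),
      b.app m x h = b' (Δ[k].map h.op x) := by
    intro m x h
    have := types_congr_hom (b.naturality h.op) x
    dsimp at this
    show b.app m x h = b.app (op nn) (Δ[k].map h.op x) (𝟙 nn)
    rw [this]
    show _ = b.app m x (𝟙 nn ≫ h)
    rw [Category.id_comp]
  have ha' : ∀ (m : SimplexCategoryᵒᵖ) (x : (∂Δ[k] : SSet.{u}).obj m) (h : nn ⟶ m.unop),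
      a.app m x h = a' ((∂Δ[k] : SSet.{u}).map h.op x) := by
    intro m x h
    have := types_congr_hom (a.naturality h.op) x
    dsimp at this
    show a.app m x h = a.app (op nn) ((∂Δ[k] : SSet.{u}).map h.op x) (𝟙 nn)
    rw [this]
    show _ = a.app m x (𝟙 nn ≫ h)
    rw [Category.id_comp]
  have hub' : ∀ y : (∂Δ[k] : SSet.{u}).obj (op nn),
      u.app (op U) (a' y) = b' ((∂Δ[k]).ι.app (op nn) y) := by
    intro y
    have := types_congr_hom (congrFun (congrArg NatTrans.app hab) (op nn)) y
    exact congrFun this (𝟙 nn)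
  -- the lift as a morphism of simplicial sets
  let ℓ : Δ[k] ⟶ coskObj n (A.obj (op V)) :=
    { app := fun m => TypeCat.ofHom fun x h => ℓ' (Δ[k].map h.op x)
      naturality := by
        intro m m' φ
        ext x
        funext h
        show ℓ' (Δ[k].map h.op (Δ[k].map φ x)) = ℓ' (Δ[k].map (h ≫ φ.unop).op x)
        rw [← FunctorToTypes.map_comp_apply]
        rfl }
  refine ⟨ℓ, ?_, ?_⟩
  · apply NatTrans.ext
    ext m x
    funext h
    have hy : ¬ Function.Surjective
        (SSet.stdSimplex.asOrderHom (Δ[k].map h.op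
          ((∂Δ[k]).ι.app m x))) :=
      ((∂Δ[k] : SSet.{u}).map h.op x).2
    show ℓ' (Δ[k].map h.op ((∂Δ[k]).ι.app m x)) = A.map g.op (a.app m x h)
    rw [ha' m x h]
    exact dif_neg hy
  · apply NatTrans.ext
    ext m x
    funext h
    show u.app (op V) (ℓ' (Δ[k].map h.op x)) = B.map g.op (b.app m x h)
    rw [hb' m x h]
    by_cases hy : Function.Surjective (SSet.stdSimplex.asOrderHom (Δ[k].map h.op x))
    · have : ℓ' (Δ[k].map h.op x) = Presheaf.localPreimage u (b' (Δ[k].map h.op x)) g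
        (hgy (Δ[k].map h.op x)) := dif_pos hy
      rw [this]
      exact Presheaf.app_localPreimage u (b' (Δ[k].map h.op x)) g (hgy _)
    · have h1 : ℓ' (Δ[k].map h.op x) = A.map g.op (a' ⟨Δ[k].map h.op x, hy⟩) := dif_neg hy
      rw [h1]
      have h2 := types_congr_hom (u.naturality g.op) (a' ⟨Δ[k].map h.op x, hy⟩)
      dsimp at h2
      rw [h2, hub' ⟨Δ[k].map h.op x, hy⟩]
      rfl

/-! ### Transport along isomorphisms -/

lemma isLocalAcyclicFibration_of_iso {C : Type u} [SmallCategory C]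
    (J : GrothendieckTopology C) {L K L' K' : SPsh C} {f : L ⟶ K} {f' : L' ⟶ K'}
    (eL : L ≅ L') (eK : K ≅ K') (hcomm : f ≫ eK.hom = eL.hom ≫ f')
    (h : IsLocalAcyclicFibration J f) : IsLocalAcyclicFibration J f' := by
  intro U k a b hab
  have h1 : eL.inv ≫ f = f' ≫ eK.inv := by
    rw [Iso.inv_comp_eq, ← Category.assoc, ← hcomm, Category.assoc, Iso.hom_inv_id,
      Category.comp_id]
  have h1' : eL.inv.app (op U) ≫ f.app (op U) = f'.app (op U) ≫ eK.inv.app (op U) := by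
    have := NatTrans.congr_app h1 (op U)
    simpa using this
  have hsq : (a ≫ eL.inv.app (op U)) ≫ f.app (op U) =
      (∂Δ[k]).ι ≫ (b ≫ eK.inv.app (op U)) := by
    rw [Category.assoc, h1', ← Category.assoc, hab, Category.assoc]
  obtain ⟨R, hR, hlift⟩ := h U k (a ≫ eL.inv.app (op U)) (b ≫ eK.inv.app (op U)) hsq
  refine ⟨R, hR, ?_⟩
  intro V g hg
  obtain ⟨ℓ₀, hℓ₁, hℓ₂⟩ := hlift g hg
  refine ⟨ℓ₀ ≫ eL.hom.app (op V), ?_, ?_⟩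
  · rw [← Category.assoc, hℓ₁]
    have : eL.inv.app (op U) ≫ L.map g.op ≫ eL.hom.app (op V) = L'.map g.op := by
      rw [← eL.inv.naturality_assoc g.op]
      simp
    rw [Category.assoc, Category.assoc, this]
  · have h2 : eL.hom.app (op V) ≫ f'.app (op V) = f.app (op V) ≫ eK.hom.app (op V) := by
      have := NatTrans.congr_app hcomm (op V)
      simpa using this.symm
    rw [Category.assoc, h2, ← Category.assoc, hℓ₂]
    have : eK.inv.app (op U) ≫ K.map g.op ≫ eK.hom.app (op V) = K'.map g.op := by
      rw [← eK.inv.naturality_assoc g.op]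
      simp
    rw [Category.assoc, Category.assoc, this]

/-! ### The main theorem -/

/-- If `j_n^*` denotes the degree-`n` component functor on simplicial presheaves and
`j_{n*}` is a right adjoint to it, then `j_{n*}` sends covering morphisms of presheaves
to local acyclic fibrations of simplicial presheaves. -/
theorem isLocalAcyclicFibration_of_rightAdjoint_map_covering
    {C : Type u} [SmallCategory C] (J : GrothendieckTopology C) (n : ℕ)
    (G : (Cᵒᵖ ⥤ Type u) ⥤ SPsh C) (adj : evalDegree C n ⊣ G)
    {A B : Cᵒᵖ ⥤ Type u} (u : A ⟶ B) (hu : IsCoveringMorphism J u) :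
    IsLocalAcyclicFibration J (G.map u) := by
  let G₀ : (Cᵒᵖ ⥤ Type u) ⥤ SPsh C := (Functor.whiskeringRight Cᵒᵖ (Type u) SSet.{u}).obj (coskFun n)
  let adj₀ : evalDegree C n ⊣ G₀ := Adjunction.whiskerRight Cᵒᵖ (coskAdj n)
  let e : G₀ ≅ G := adj₀.rightAdjointUniq adj
  have h₀ : IsLocalAcyclicFibration J (G₀.map u) :=
    isLocalAcyclicFibration_coskFun J n u (isLocallySurjective_of_isCoveringMorphism J u hu)
  exact isLocalAcyclicFibration_of_iso J (e.app A) (e.app B)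
    (by simp only [Iso.app_hom]; exact e.hom.naturality u) h₀
end
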